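/- arXiv:2605.04855 — 9 statements merged into one kernel-verified Lean document; each statement's English description precedes it below -/
import Mathlib

section
/- In a factor-critical graph, every edge is contained in some near-perfect matching (a matching covering all but one vertex). -/
/-! Multigraphs (parallel edges allowed, no loops) with half-edge 2-colourings,
    matchings, W-state graphs and W-cones, following the paper. -/

structure Multigraph (V E : Type) where
  fst : E → V
  snd : E → V
  no_loop : ∀ e, fst e ≠ snd e

namespace Multigraph

variable {V E : Type} (G : Multigraph V E)

/-- Edge `e` is incident with vertex `v`. -/
def Inc (e : E) (v : V) : Prop := G.fst e = v ∨ G.snd e = v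

/-- Adjacency using only edges in the edge set `F`. -/
def AdjIn (F : Set E) (u v : V) : Prop :=
  u ≠ v ∧ ∃ e ∈ F, G.Inc e u ∧ G.Inc e v

def Adj (u v : V) : Prop := G.AdjIn Set.univ u v

/-- Reachability inside the vertex set `S`, using only edges in `F`. -/
def ReachOn (F : Set E) (S : Set V) (u v : V) : Prop :=
  Relation.ReflTransGen (fun a b => a ∈ S ∧ b ∈ S ∧ G.AdjIn F a b) u v

/-- The subgraph with edge set `F` induced on the vertex set `S` is connected. -/
def ConnectedOn (F : Set E) (S : Set V) : Prop :=
  ∀ u ∈ S, ∀ v ∈ S, G.ReachOn F S u v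

def Connected : Prop := G.ConnectedOn Set.univ Set.univ

/-- `K` is a connected component of the subgraph with edge set `F` induced on `S`. -/
def IsCompOn (F : Set E) (S : Set V) (K : Set V) : Prop :=
  ∃ v ∈ S, K = {u | u ∈ S ∧ G.ReachOn F S u v}

def IsMatching (M : Set E) : Prop :=
  ∀ e ∈ M, ∀ f ∈ M, e ≠ f → ∀ v : V, ¬ (G.Inc e v ∧ G.Inc f v)

/-- `M` is a perfect matching of the subgraph of `G` induced on `S`. -/
def IsPerfectMatchingOn (S : Set V) (M : Set E) : Prop :=
  (∀ e ∈ M, G.fst e ∈ S ∧ G.snd e ∈ S) ∧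
  ∀ v ∈ S, ∃! e, e ∈ M ∧ G.Inc e v

def IsPerfectMatching (M : Set E) : Prop :=
  G.IsPerfectMatchingOn Set.univ M

/-- Every edge lies in some perfect matching. -/
def MatchingCovered : Prop :=
  ∀ e : E, ∃ M : Set E, G.IsPerfectMatching M ∧ e ∈ M

/-- The subgraph with edge set `F` induced on `K` is factor-critical. -/
def FactorCriticalOn (F : Set E) (K : Set V) : Prop :=
  ∀ v ∈ K, ∃ M : Set E, M ⊆ F ∧ G.IsPerfectMatchingOn (K \ {v}) M

def FactorCritical : Prop := G.FactorCriticalOn Set.univ Set.univ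

/-- `M` is a maximum matching among matchings using only edges in `F`. -/
def IsMaxMatchingIn (F M : Set E) : Prop :=
  M ⊆ F ∧ G.IsMatching M ∧
  ∀ N : Set E, N ⊆ F → G.IsMatching N → N.ncard ≤ M.ncard

/-- Half-edge 2-colourings are functions `c : E → V → Bool`
    (`true` = red, `false` = blue; only the values at endpoints matter). -/
def Bichromatic (c : E → V → Bool) (e : E) : Prop :=
  c e (G.fst e) ≠ c e (G.snd e)

/-- The monochromatic edges. -/
def MonoEdges (c : E → V → Bool) : Set E := {e | ¬ G.Bichromatic c e}

/-- Every vertex has an incident red half-edge. -/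
def VertexCond (c : E → V → Bool) : Prop :=
  ∀ v : V, ∃ e : E, G.Inc e v ∧ c e v = true

/-- Every perfect matching contains exactly one bichromatic edge. -/
def MatchingCond (c : E → V → Bool) : Prop :=
  ∀ M : Set E, G.IsPerfectMatching M → ∃! e, e ∈ M ∧ G.Bichromatic c e

/-- All monochromatic edges are blue. -/
def NoRedMono (c : E → V → Bool) : Prop :=
  ∀ e : E, ¬ G.Bichromatic c e → c e (G.fst e) = false

/-- W-state graph. -/
def IsWState (c : E → V → Bool) : Prop :=
  G.MatchingCovered ∧ G.MatchingCond c ∧ G.VertexCond c ∧ G.NoRedMono c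

def Universal (v : V) : Prop := ∀ u : V, u ≠ v → G.Adj u v

/-- W-cone with apex `v`. -/
def IsWConeWithApex (c : E → V → Bool) (v : V) : Prop :=
  G.MatchingCovered ∧ G.Universal v ∧
  (∀ e : E, G.Bichromatic c e ↔ G.Inc e v) ∧
  G.VertexCond c ∧ G.NoRedMono c

def IsWCone (c : E → V → Bool) : Prop := ∃ v : V, G.IsWConeWithApex c v

/-- `e` and `f` are parallel edges (same pair of endpoints). -/
def Parallel (e f : E) : Prop :=
  (G.fst e = G.fst f ∧ G.snd e = G.snd f) ∨
  (G.fst e = G.snd f ∧ G.snd e = G.fst f)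

/-- The cut `δ(X)`. -/
def CutEdges (X : Set V) : Set E :=
  {e | (G.fst e ∈ X ∧ G.snd e ∉ X) ∨ (G.fst e ∉ X ∧ G.snd e ∈ X)}

/-- `δ(X)` is a tight cut. -/
def IsTightCut (X : Set V) : Prop :=
  ∀ M : Set E, G.IsPerfectMatching M → ∃! e, e ∈ M ∧ e ∈ G.CutEdges X

def Bipartite : Prop :=
  ∃ f : V → Bool, ∀ e : E, f (G.fst e) ≠ f (G.snd e)

/-- A brick: non-bipartite matching-covered graph with no non-trivial tight cut. -/
def IsBrick : Prop :=
  G.MatchingCovered ∧ ¬ G.Bipartite ∧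
  ∀ X : Set V, 2 ≤ X.ncard → 2 ≤ (Set.univ \ X).ncard → ¬ G.IsTightCut X

end Multigraph

/-- In a factor-critical graph, every edge is contained in some
near-perfect matching (a matching covering all but one vertex). -/
theorem stmt0 {V E : Type} [Fintype V] [Fintype E] (G : Multigraph V E)
    (hfc : G.FactorCritical) (e : E) :
    ∃ (u : V) (M : Set E), G.IsPerfectMatchingOn (Set.univ \ {u}) M ∧ e ∈ M := by
  classical
  set a := G.fst e with ha
  set b := G.snd e with hb
  have hab : a ≠ b := G.no_loop e
  obtain ⟨M, -, hM1, hM2⟩ := hfc a (Set.mem_univ a)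
  -- endpoints of edges in M avoid a
  have havoid : ∀ g ∈ M, G.fst g ≠ a ∧ G.snd g ≠ a := by
    intro g hg
    obtain ⟨h1, h2⟩ := hM1 g hg
    exact ⟨fun h => h1.2 h, fun h => h2.2 h⟩
  have hbmem : b ∈ Set.univ \ ({a} : Set V) :=
    ⟨Set.mem_univ b, fun h => hab (Set.mem_singleton_iff.mp h).symm⟩
  obtain ⟨f, ⟨hfM, hfb⟩, hfuniq⟩ := hM2 b hbmem
  -- uniqueness of M at vertices ≠ a
  have key : ∀ v : V, v ≠ a → ∀ g ∈ M, G.Inc g v → ∀ g' ∈ M, G.Inc g' v → g = g' := by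
    intro v hv g hg hgi g' hg' hgi'
    obtain ⟨x, -, hx⟩ := hM2 v ⟨Set.mem_univ v, fun h => hv (Set.mem_singleton_iff.mp h)⟩
    rw [hx g ⟨hg, hgi⟩, hx g' ⟨hg', hgi'⟩]
  set w : V := if G.fst f = b then G.snd f else G.fst f with hw
  have hIncfw : G.Inc f w := by
    by_cases h : G.fst f = b
    · simp [hw, h, Multigraph.Inc]
    · simp [hw, h, Multigraph.Inc]
  have hwb : w ≠ b := by
    by_cases h : G.fst f = b
    · simp only [hw, if_pos h]
      intro h2; exact G.no_loop f (h.trans h2.symm)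
    · simp only [hw, if_neg h]; exact h
  have hwa : w ≠ a := by
    obtain ⟨h1, h2⟩ := havoid f hfM
    by_cases h : G.fst f = b
    · simp only [hw, if_pos h]; exact h2
    · simp only [hw, if_neg h]; exact h1
  have henotM : e ∉ M := fun h => (havoid e h).1 rfl
  have hef : e ≠ f := fun h => henotM (h ▸ hfM)
  refine ⟨w, insert e (M \ {f}), ⟨?_, ?_⟩, Set.mem_insert e _⟩
  · intro g hg
    rcases hg with rfl | ⟨hgM, hgf⟩
    · exact ⟨⟨Set.mem_univ _, fun h => hwa (Set.mem_singleton_iff.mp h).symm⟩,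
        ⟨Set.mem_univ _, fun h => hwb (Set.mem_singleton_iff.mp h).symm⟩⟩
    · constructor
      · refine ⟨Set.mem_univ _, fun h => ?_⟩
        have : G.Inc g w := Or.inl (Set.mem_singleton_iff.mp h)
        exact hgf (key w hwa g hgM this f hfM hIncfw)
      · refine ⟨Set.mem_univ _, fun h => ?_⟩
        have : G.Inc g w := Or.inr (Set.mem_singleton_iff.mp h)
        exact hgf (key w hwa g hgM this f hfM hIncfw)
  · intro v hv
    have hvw : v ≠ w := fun h => hv.2 (Set.mem_singleton_iff.mpr h)
    by_cases hva : v = a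
    · subst hva
      refine ⟨e, ⟨Set.mem_insert e _, Or.inl rfl⟩, ?_⟩
      rintro g ⟨hg, hgi⟩
      rcases hg with rfl | ⟨hgM, -⟩
      · rfl
      · exact absurd hgi (by
          obtain ⟨h1, h2⟩ := havoid g hgM
          rintro (h | h) <;> [exact h1 h; exact h2 h])
    · by_cases hvb : v = b
      · subst hvb
        refine ⟨e, ⟨Set.mem_insert e _, Or.inr rfl⟩, ?_⟩
        rintro g ⟨hg, hgi⟩
        rcases hg with rfl | ⟨hgM, hgf⟩
        · rfl
        · exact absurd (key b hva g hgM hgi f hfM hfb) hgf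
      · obtain ⟨g, ⟨hgM, hgi⟩, -⟩ :=
          hM2 v ⟨Set.mem_univ v, fun h => hva (Set.mem_singleton_iff.mp h)⟩
        have hgf : g ≠ f := by
          rintro rfl
          rcases hgi with h | h
          · by_cases h' : G.fst g = b
            · exact hvb (h'.symm.trans h).symm
            · exact hvw (by rw [hw, if_neg h', h])
          · by_cases h' : G.fst g = b
            · exact hvw (by rw [hw, if_pos h', h])
            · rcases hfb with hf1 | hf2
              · exact h' hf1
              · exact hvb (h.symm.trans hf2)
        refine ⟨g, ⟨Set.mem_insert_of_mem _ ⟨hgM, hgf⟩, hgi⟩, ?_⟩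
        rintro g' ⟨hg', hgi'⟩
        rcases hg' with rfl | ⟨hg'M, -⟩
        · exact absurd hgi' (by rintro (h | h) <;> [exact hva h.symm; exact hvb h.symm])
        · exact key v hva g' hg'M hgi' g hgM hgi
end

section
/- A connected matching-covered graph (with at least one edge and a perfect matching) has no cut vertex; in particular it is 2-connected. -/
/-! Let `v` be a vertex and `K` a set of vertices of `G - v` closed under adjacency in `G - v`.
If `M` is a perfect matching and `w` the partner of `v` in `M`, then `M` matches `K \ {w}`
within itself, so `|K \ {w}|` is even. As `G` is matching-covered, every neighbour `w` of `v`
occurs as such a partner; hence `|K|` is odd if `K` contains a neighbour of `v` and even if it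
misses one. So `K` contains all neighbours of `v` or none, and by connectivity of `G` the
component of `G - v` of any vertex contains a neighbour of `v`: there is just one component. -/

namespace Multigraph

variable {V E : Type} (G : Multigraph V E)

lemma eq_or_eq_of_inc {e : E} {v w x : V} (hv : G.Inc e v) (hw : G.Inc e w) (hvw : v ≠ w)
    (hx : G.Inc e x) : x = v ∨ x = w := by
  have := G.no_loop e
  unfold Inc at *
  grind

lemma adjIn_symm {F : Set E} {u v : V} (h : G.AdjIn F u v) : G.AdjIn F v u :=
  let ⟨hne, e, he, hu, hv⟩ := h
  ⟨hne.symm, e, he, hv, hu⟩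

lemma reachOn_symm {F : Set E} {S : Set V} {u w : V} (h : G.ReachOn F S u w) :
    G.ReachOn F S w u :=
  Relation.reflTransGen_swap.mp
    (Relation.ReflTransGen.mono (fun _ _ hab => ⟨hab.2.1, hab.1, G.adjIn_symm hab.2.2⟩) _ _ h)

lemma exists_reachOn_adjIn_of_reachOn {F : Set E} {u v : V}
    (h : G.ReachOn F Set.univ u v) (huv : u ≠ v) :
    ∃ w, w ≠ v ∧ G.ReachOn F (Set.univ \ {v}) u w ∧ G.AdjIn F w v := by
  induction h using Relation.ReflTransGen.head_induction_on with
  | refl => exact absurd rfl huv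
  | @head x y hxy _ ih =>
    by_cases hy : y = v
    · exact ⟨x, huv, .refl, hy ▸ hxy.2.2⟩
    · obtain ⟨w, hwv, hyw, hwadj⟩ := ih hy
      exact ⟨w, hwv, .head ⟨by simpa using huv, by simpa using hy, hxy.2.2⟩ hyw, hwadj⟩

variable {G}

lemma IsPerfectMatchingOn.eq_of_inc {S : Set V} {M : Set E} (hM : G.IsPerfectMatchingOn S M)
    {e f : E} {x : V} (hx : x ∈ S) (he : e ∈ M) (hf : f ∈ M) (hex : G.Inc e x)
    (hfx : G.Inc f x) : e = f :=
  (hM.2 x hx).unique ⟨he, hex⟩ ⟨hf, hfx⟩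

lemma IsPerfectMatchingOn.diff_ends {S : Set V} {M : Set E} (hM : G.IsPerfectMatchingOn S M)
    {e : E} (he : e ∈ M) :
    G.IsPerfectMatchingOn (S \ {G.fst e, G.snd e}) (M \ {e}) := by
  have hends := hM.1 e he
  have not_end : ∀ f ∈ M, f ≠ e → ∀ x, G.Inc f x → x ≠ G.fst e ∧ x ≠ G.snd e := by
    rintro f hf hfe x hfx
    constructor <;> rintro rfl
    · exact hfe (hM.eq_of_inc hends.1 hf he hfx (Or.inl rfl))
    · exact hfe (hM.eq_of_inc hends.2 hf he hfx (Or.inr rfl))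
  refine ⟨fun f ⟨hf, hfe⟩ => ?_, fun x ⟨hxS, hxe⟩ => ?_⟩
  · have h1 := not_end f hf hfe _ (Or.inl rfl)
    have h2 := not_end f hf hfe _ (Or.inr rfl)
    exact ⟨⟨(hM.1 f hf).1, by simp [h1.1, h1.2]⟩, ⟨(hM.1 f hf).2, by simp [h2.1, h2.2]⟩⟩
  · obtain ⟨g, ⟨hg, hgx⟩, hg_uniq⟩ := hM.2 x hxS
    have hge : g ≠ e := by
      rintro rfl
      rcases hgx with h | h <;> simp [h] at hxe
    exact ⟨g, ⟨⟨hg, hge⟩, hgx⟩, fun f ⟨⟨hf, _⟩, hfx⟩ => hg_uniq f ⟨hf, hfx⟩⟩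

lemma IsPerfectMatchingOn.even_ncard {S : Set V} {M : Set E} (hM : G.IsPerfectMatchingOn S M)
    (hS : S.Finite) : Even S.ncard := by
  induction hn : S.ncard using Nat.strong_induction_on generalizing S M with
  | _ n ih =>
    obtain rfl | ⟨x, hx⟩ := S.eq_empty_or_nonempty
    · simp [← hn]
    obtain ⟨e, ⟨he, -⟩, -⟩ := hM.2 x hx
    have hsub : {G.fst e, G.snd e} ⊆ S :=
      Set.insert_subset (hM.1 e he).1 (Set.singleton_subset_iff.mpr (hM.1 e he).2)
    have hcard : (S \ {G.fst e, G.snd e}).ncard + 2 = n := by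
      rw [← hn, ← Set.ncard_pair (G.no_loop e), Set.ncard_sdiff_add_ncard_of_subset hsub hS]
    obtain ⟨k, hk⟩ := ih _ (by omega) (hM.diff_ends he) hS.sdiff rfl
    exact ⟨k + 1, by omega⟩

lemma IsPerfectMatching.isPerfectMatchingOn_of_closed {M : Set E} (hM : G.IsPerfectMatching M)
    {K : Set V} (hK : ∀ e ∈ M, ∀ x ∈ K, G.Inc e x → G.fst e ∈ K ∧ G.snd e ∈ K) :
    G.IsPerfectMatchingOn K {e ∈ M | G.fst e ∈ K ∧ G.snd e ∈ K} := by
  refine ⟨fun e he => he.2, fun x hx => ?_⟩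
  obtain ⟨e, ⟨he, hex⟩, he_uniq⟩ := hM.2 x trivial
  exact ⟨e, ⟨⟨he, hK e he x hx hex⟩, hex⟩,
    fun f ⟨⟨hf, _⟩, hfx⟩ => he_uniq f ⟨hf, hfx⟩⟩

lemma IsPerfectMatching.even_ncard_diff_partner [Finite V] {M : Set E}
    (hM : G.IsPerfectMatching M) {e : E} {v w : V} (he : e ∈ M) (hev : G.Inc e v)
    (hew : G.Inc e w) (hvw : v ≠ w) {K : Set V} (hvK : v ∉ K)
    (hK : ∀ x ∈ K, ∀ y, y ≠ v → G.Adj x y → y ∈ K) : Even (K \ {w}).ncard := by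
  refine (hM.isPerfectMatchingOn_of_closed ?_).even_ncard (Set.toFinite _)
  rintro g hg x ⟨hxK, hxw⟩ hgx
  have hxv : x ≠ v := fun h => hvK (h ▸ hxK)
  have hge : g ≠ e := by
    rintro rfl
    exact (G.eq_or_eq_of_inc hev hew hvw hgx).elim hxv hxw
  have end_mem : ∀ y, G.Inc g y → y ∈ K \ {w} := by
    intro y hgy
    have hyv : y ≠ v := by
      rintro rfl
      exact hge (hM.eq_of_inc trivial hg he hgy hev)
    have hyw : y ≠ w := by
      rintro rfl
      exact hge (hM.eq_of_inc trivial hg he hgy hew)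
    by_cases hxy : x = y
    · exact hxy ▸ ⟨hxK, hxw⟩
    · exact ⟨hK x hxK y hyv ⟨hxy, g, trivial, hgx, hgy⟩, hyw⟩
  exact ⟨end_mem _ (Or.inl rfl), end_mem _ (Or.inr rfl)⟩

lemma MatchingCovered.even_ncard_diff_of_adj [Finite V] (hmc : G.MatchingCovered) {v w : V}
    (hvw : G.Adj v w) {K : Set V} (hvK : v ∉ K)
    (hK : ∀ x ∈ K, ∀ y, y ≠ v → G.Adj x y → y ∈ K) : Even (K \ {w}).ncard := by
  obtain ⟨hne, e, -, hev, hew⟩ := hvw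
  obtain ⟨M, hM, he⟩ := hmc e
  exact hM.even_ncard_diff_partner he hev hew hne hvK hK

lemma MatchingCovered.mem_of_adj_of_mem [Finite V] (hmc : G.MatchingCovered) {v w w' : V}
    (hvw : G.Adj v w) (hvw' : G.Adj v w') {K : Set V} (hvK : v ∉ K)
    (hK : ∀ x ∈ K, ∀ y, y ≠ v → G.Adj x y → y ∈ K) (hwK : w ∈ K) : w' ∈ K := by
  by_contra hw'K
  have hcard : (K \ {w}).ncard + 1 = K.ncard := Set.ncard_sdiff_singleton_add_one hwK K.toFinite
  have heven := hmc.even_ncard_diff_of_adj hvw' hvK hK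
  rw [Set.sdiff_singleton_eq_self hw'K, ← hcard, Nat.even_add_one] at heven
  exact heven (hmc.even_ncard_diff_of_adj hvw hvK hK)

end Multigraph

theorem stmt1_general {V E : Type} [Fintype V] (G : Multigraph V E)
    (hconn : G.Connected) (hmc : G.MatchingCovered) :
    ∀ v : V, G.ConnectedOn Set.univ (Set.univ \ {v}) := by
  intro v a ha b hb
  by_contra hab
  set K : Set V := {x | x ∈ Set.univ \ {v} ∧ G.ReachOn Set.univ (Set.univ \ {v}) x b}
  have hvK : v ∉ K := fun h => h.1.2 rfl
  have hK : ∀ x ∈ K, ∀ y, y ≠ v → G.Adj x y → y ∈ K := fun x hx y hyv hxy =>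
    ⟨by simpa using hyv, .head ⟨by simpa using hyv, hx.1, G.adjIn_symm hxy⟩ hx.2⟩
  have hbv : b ≠ v := by simpa using hb
  have hav : a ≠ v := by simpa using ha
  obtain ⟨w, hwv, hbw, hwadj⟩ :=
    G.exists_reachOn_adjIn_of_reachOn (hconn b trivial v trivial) hbv
  obtain ⟨w', -, haw', hw'adj⟩ :=
    G.exists_reachOn_adjIn_of_reachOn (hconn a trivial v trivial) hav
  have hwK : w ∈ K := ⟨by simpa using hwv, G.reachOn_symm hbw⟩
  have hw'K : w' ∈ K :=
    hmc.mem_of_adj_of_mem (G.adjIn_symm hwadj) (G.adjIn_symm hw'adj) hvK hK hwK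
  exact hab (haw'.trans hw'K.2)

/-- A connected matching-covered graph (with at least one edge and a
perfect matching) has no cut vertex; in particular it is 2-connected. -/
theorem stmt1 {V E : Type} [Fintype V] [Fintype E] [Nonempty E] (G : Multigraph V E)
    (hconn : G.Connected) (hmc : G.MatchingCovered)
    (hpm : ∃ M : Set E, G.IsPerfectMatching M) :
    ∀ v : V, G.ConnectedOn Set.univ (Set.univ \ {v}) :=
  stmt1_general G hconn hmc
end

section
/- Let (G,c) be a W-state graph on n vertices and let G_m be the spanning subgraph consisting of all monochromatic edges. Then the maximum matching in G_m has size exactly n/2 - 1. -/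
/-! A perfect matching `M` of a W-state graph has exactly one bichromatic edge `e₀`; so `M \ {e₀}`
is a monochromatic matching with `n/2 - 1` edges. A monochromatic matching with `n/2` edges would
be perfect and hence contain a bichromatic edge. Counting uses the endpoint map `M × Bool → V`,
which is injective for a matching and bijective for a perfect matching. -/

lemma Set.nat_card_prod_bool {α : Type*} (s : Set α) : Nat.card (s × Bool) = 2 * s.ncard := by
  rw [Nat.card_prod, Nat.card_eq_fintype_card (α := Bool), Fintype.card_bool,
    Nat.card_coe_set_eq, mul_comm]

namespace Multigraph

variable {V E : Type} (G : Multigraph V E)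

def endpoint (e : E) (b : Bool) : V := bif b then G.fst e else G.snd e

lemma endpoint_injective (e : E) : Function.Injective (G.endpoint e) := by
  have := G.no_loop e
  intro b b' h
  cases b <;> cases b' <;> simp_all [endpoint, eq_comm]

lemma inc_iff_exists_endpoint {e : E} {v : V} : G.Inc e v ↔ ∃ b, G.endpoint e b = v :=
  ⟨fun h => h.elim (fun h => ⟨true, h⟩) (fun h => ⟨false, h⟩),
    fun ⟨b, h⟩ => by cases b <;> simp_all [endpoint, Inc]⟩

variable {G}

lemma IsPerfectMatching.isMatching {M : Set E} (hM : G.IsPerfectMatching M) : G.IsMatching M :=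
  fun _ he _ hf hef v ⟨hev, hfv⟩ => hef ((hM.2 v trivial).unique ⟨he, hev⟩ ⟨hf, hfv⟩)

lemma IsMatching.injective_endpoint {M : Set E} (hM : G.IsMatching M) :
    Function.Injective (fun p : M × Bool => G.endpoint p.1 p.2) := by
  rintro ⟨⟨e, he⟩, b⟩ ⟨⟨f, hf⟩, b'⟩ (h : G.endpoint e b = G.endpoint f b')
  obtain rfl : e = f := by
    by_contra hef
    exact hM e he f hf hef _ ⟨G.inc_iff_exists_endpoint.2 ⟨b, rfl⟩,
      G.inc_iff_exists_endpoint.2 ⟨b', h.symm⟩⟩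
  rw [G.endpoint_injective e h]

lemma IsMatching.finite [Finite V] {M : Set E} (hM : G.IsMatching M) : M.Finite :=
  have : Finite (M × Bool) := Finite.of_injective _ hM.injective_endpoint
  have : Finite M := Finite.prod_left Bool
  Set.toFinite M

lemma IsMatching.two_mul_ncard_le [Finite V] {M : Set E} (hM : G.IsMatching M) :
    2 * M.ncard ≤ Nat.card V :=
  M.nat_card_prod_bool ▸ Nat.card_le_card_of_injective _ hM.injective_endpoint

lemma IsPerfectMatching.two_mul_ncard [Finite V] {M : Set E} (hM : G.IsPerfectMatching M) :
    2 * M.ncard = Nat.card V := by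
  have hsurj : Function.Surjective (fun p : M × Bool => G.endpoint p.1 p.2) := fun v => by
    obtain ⟨e, ⟨he, hev⟩, -⟩ := hM.2 v trivial
    obtain ⟨b, hb⟩ := G.inc_iff_exists_endpoint.1 hev
    exact ⟨(⟨e, he⟩, b), hb⟩
  exact M.nat_card_prod_bool ▸ Nat.card_eq_of_bijective _ ⟨hM.isMatching.injective_endpoint, hsurj⟩

lemma IsMatching.isPerfectMatching_of_two_mul_ncard_eq [Finite V] {M : Set E}
    (hM : G.IsMatching M) (hcard : 2 * M.ncard = Nat.card V) : G.IsPerfectMatching M := by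
  have hbij := hM.injective_endpoint.bijective_of_nat_card_le (by
    rw [M.nat_card_prod_bool, hcard])
  refine ⟨fun _ _ => ⟨trivial, trivial⟩, fun v _ => ?_⟩
  obtain ⟨⟨⟨e, he⟩, b⟩, hb⟩ := hbij.2 v
  refine ⟨e, ⟨he, G.inc_iff_exists_endpoint.2 ⟨b, hb⟩⟩, fun f ⟨hf, hfv⟩ => ?_⟩
  by_contra hfe
  exact hM f hf e he hfe v ⟨hfv, G.inc_iff_exists_endpoint.2 ⟨b, hb⟩⟩

lemma MatchingCovered.exists_isPerfectMatching (hG : G.MatchingCovered)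
    (hcov : ∀ v, ∃ e, G.Inc e v) : ∃ M, G.IsPerfectMatching M := by
  by_cases hV : Nonempty V
  · obtain ⟨v⟩ := hV
    obtain ⟨e, -⟩ := hcov v
    obtain ⟨M, hM, -⟩ := hG e
    exact ⟨M, hM⟩
  · exact ⟨∅, fun _ h => h.elim, fun v => (hV ⟨v⟩).elim⟩

variable {c : E → V → Bool}

lemma MatchingCond.not_isPerfectMatching (hc : G.MatchingCond c) {M : Set E}
    (hmono : M ⊆ G.MonoEdges c) : ¬ G.IsPerfectMatching M := fun hM =>
  have ⟨_, ⟨he, hbi⟩, _⟩ := hc M hM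
  hmono he hbi

lemma MatchingCond.exists_mono_matching (hc : G.MatchingCond c) {M : Set E}
    (hM : G.IsPerfectMatching M) (hfin : M.Finite) :
    ∃ N ⊆ G.MonoEdges c, G.IsMatching N ∧ N.ncard + 1 = M.ncard := by
  obtain ⟨e₀, ⟨he₀, -⟩, hunique⟩ := hc M hM
  refine ⟨M \ {e₀}, fun e ⟨he, hne⟩ hbi => hne (hunique e ⟨he, hbi⟩),
    fun e he f hf => hM.isMatching e he.1 f hf.1, ?_⟩
  rw [Set.ncard_sdiff_singleton_add_one he₀ hfin]

end Multigraph

theorem stmt5_general {V E : Type} [Fintype V] (G : Multigraph V E)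
    (c : E → V → Bool) (h : G.IsWState c) :
    (∃ M : Set E, M ⊆ G.MonoEdges c ∧ G.IsMatching M ∧
        M.ncard = Fintype.card V / 2 - 1) ∧
    (∀ M : Set E, M ⊆ G.MonoEdges c → G.IsMatching M →
        M.ncard ≤ Fintype.card V / 2 - 1) := by
  obtain ⟨hcovered, hcond, hred, -⟩ := h
  obtain ⟨M, hM⟩ := hcovered.exists_isPerfectMatching fun v => (hred v).imp fun _ he => he.1
  have hn : Fintype.card V = 2 * M.ncard := by rw [← Nat.card_eq_fintype_card, hM.two_mul_ncard]
  obtain ⟨N, hmono, hN, hcard⟩ := hcond.exists_mono_matching hM hM.isMatching.finite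
  refine ⟨⟨N, hmono, hN, by omega⟩, fun N' hmono' hN' => ?_⟩
  have hle := hN'.two_mul_ncard_le
  have hne : 2 * N'.ncard ≠ Nat.card V := fun heq =>
    hcond.not_isPerfectMatching hmono' (hN'.isPerfectMatching_of_two_mul_ncard_eq heq)
  rw [Nat.card_eq_fintype_card] at hle hne
  omega

/-- In a W-state graph on `n` vertices, the maximum matching of the
monochromatic subgraph `G_m` has size exactly `n/2 - 1`. -/
theorem stmt5 {V E : Type} [Fintype V] [Fintype E] (G : Multigraph V E)
    (c : E → V → Bool) (h : G.IsWState c) :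
    (∃ M : Set E, M ⊆ G.MonoEdges c ∧ G.IsMatching M ∧
        M.ncard = Fintype.card V / 2 - 1) ∧
    (∀ M : Set E, M ⊆ G.MonoEdges c → G.IsMatching M →
        M.ncard ≤ Fintype.card V / 2 - 1) :=
  stmt5_general G c h
end

section
/- If every vertex of a graph is inessential (i.e., for each vertex there is a maximum matching missing it), then every connected component of the graph is factor-critical. -/
section Aux

open Multigraph Set

variable {V E : Type} {G : Multigraph V E}

/-- Vertices covered by the edge set `M`. -/
def mcov (G : Multigraph V E) (M : Set E) : Set V := {v | ∃ e ∈ M, G.Inc e v}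

lemma mem_mcov {M : Set E} {v : V} : v ∈ mcov G M ↔ ∃ e ∈ M, G.Inc e v := Iff.rfl

lemma mcov_mono {M N : Set E} (h : M ⊆ N) : mcov G M ⊆ mcov G N :=
  fun _ ⟨e, he, hv⟩ => ⟨e, h he, hv⟩

lemma inc_other {e : E} {t : V} (h : G.Inc e t) :
    ∃ t1, G.Inc e t1 ∧ t1 ≠ t ∧ ∀ v, G.Inc e v → v = t ∨ v = t1 := by
  rcases h with h | h
  · refine ⟨G.snd e, Or.inr rfl, ?_, ?_⟩
    · intro hc; exact G.no_loop e (h.trans hc.symm)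
    · rintro v (hv | hv)
      · exact Or.inl ((hv.symm.trans h))
      · exact Or.inr hv.symm
  · refine ⟨G.fst e, Or.inl rfl, ?_, ?_⟩
    · intro hc; exact G.no_loop e (hc.trans h.symm)
    · rintro v (hv | hv)
      · exact Or.inr hv.symm
      · exact Or.inl (hv.symm.trans h)

lemma matching_unique {M : Set E} (hM : G.IsMatching M) {e f : E} (he : e ∈ M) (hf : f ∈ M)
    {v : V} (hv : G.Inc e v) (hv' : G.Inc f v) : e = f := by
  by_contra hne
  exact hM e he f hf hne v ⟨hv, hv'⟩

lemma matching_mono {M N : Set E} (h : N ⊆ M) (hM : G.IsMatching M) : G.IsMatching N :=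
  fun e he f hf => hM e (h he) f (h hf)

lemma mcov_diff {M : Set E} (hM : G.IsMatching M) {e : E} (he : e ∈ M) {v : V} :
    v ∈ mcov G (M \ {e}) ↔ v ∈ mcov G M ∧ ¬ G.Inc e v := by
  constructor
  · rintro ⟨f, ⟨hfM, hfe⟩, hfv⟩
    refine ⟨⟨f, hfM, hfv⟩, fun hev => ?_⟩
    exact hfe (Set.mem_singleton_iff.mpr (matching_unique hM hfM he hfv hev))
  · rintro ⟨⟨f, hfM, hfv⟩, hev⟩
    refine ⟨f, ⟨hfM, fun hc => ?_⟩, hfv⟩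
    rw [Set.mem_singleton_iff] at hc; subst hc; exact hev hfv

lemma mcov_diff' {M : Set E} (hM : G.IsMatching M) {e : E} (he : e ∈ M) {v : V} :
    v ∈ mcov G M ↔ v ∈ mcov G (M \ {e}) ∨ G.Inc e v := by
  rw [mcov_diff hM he]
  constructor
  · intro h
    by_cases hc : G.Inc e v
    · exact Or.inr hc
    · exact Or.inl ⟨h, hc⟩
  · rintro (⟨h, _⟩ | h)
    · exact h
    · exact ⟨e, he, h⟩


lemma matching_insert {M : Set E} (hM : G.IsMatching M) {e : E} {a b : V}
    (hend : ∀ v, G.Inc e v → v = a ∨ v = b)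
    (haM : a ∉ mcov G M) (hbM : b ∉ mcov G M) : G.IsMatching (insert e M) := by
  intro f hf g hg hfg v hv
  rcases Set.mem_insert_iff.mp hf with heqf | hf
  · rcases Set.mem_insert_iff.mp hg with heqg | hg
    · exact hfg (heqf.trans heqg.symm)
    · have hv1 : G.Inc e v := heqf ▸ hv.1
      rcases hend v hv1 with rfl | rfl
      · exact haM ⟨g, hg, hv.2⟩
      · exact hbM ⟨g, hg, hv.2⟩
  · rcases Set.mem_insert_iff.mp hg with heqg | hg
    · have hv2 : G.Inc e v := heqg ▸ hv.2
      rcases hend v hv2 with rfl | rfl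
      · exact haM ⟨f, hf, hv.1⟩
      · exact hbM ⟨f, hf, hv.1⟩
    · exact hM f hf g hg hfg v hv

/-- The key exchange lemma: if `t` is covered by `M` and exposed by `N`, then either `N`
can be enlarged (inside `M ∪ N`), or there is a matching of the same size as `M`
exposing `t` whose covered set gains one `N`-covered vertex `x` and loses `t`. -/
lemma exchange [Fintype V] [Fintype E] : ∀ n : ℕ, ∀ M N : Set E, M.ncard = n → G.IsMatching M → G.IsMatching N →
    ∀ t : V, t ∈ mcov G M → t ∉ mcov G N →
    (∃ N' : Set E, G.IsMatching N' ∧ N'.ncard = N.ncard + 1 ∧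
        mcov G N' ⊆ mcov G N ∪ mcov G M) ∨
    (∃ M' : Set E, ∃ x : V, G.IsMatching M' ∧ M'.ncard = M.ncard ∧ x ∉ mcov G M ∧
        x ∈ mcov G N ∧ mcov G M' = (mcov G M ∪ {x}) \ {t}) := by
  intro n
  induction n using Nat.strong_induction_on with
  | _ n ih =>
  intro M N hcard hM hN t htM htN
  obtain ⟨e1, he1M, he1t⟩ := htM
  obtain ⟨t1, he1t1, ht1t, he1end⟩ := inc_other he1t
  by_cases ht1N : t1 ∈ mcov G N
  case neg =>
    left
    have he1N : e1 ∉ N := fun hmem => htN ⟨e1, hmem, he1t⟩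
    refine ⟨insert e1 N, matching_insert hN he1end htN ht1N, ?_, ?_⟩
    · rw [Set.ncard_insert_of_notMem he1N]
    · rintro v ⟨f, hf, hfv⟩
      rcases Set.mem_insert_iff.mp hf with heq | hf
      · exact Or.inr ⟨e1, he1M, heq ▸ hfv⟩
      · exact Or.inl ⟨f, hf, hfv⟩
  case pos =>
  obtain ⟨f1, hf1N, hf1t1⟩ := ht1N
  obtain ⟨t2, hf1t2, ht2t1, hf1end⟩ := inc_other hf1t1
  have ht2t : t2 ≠ t := by rintro rfl; exact htN ⟨f1, hf1N, hf1t2⟩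
  have hMd : G.IsMatching (M \ {e1}) := matching_mono Set.diff_subset hM
  have hNd : G.IsMatching (N \ {f1}) := matching_mono Set.diff_subset hN
  have ht1Md : t1 ∉ mcov G (M \ {e1}) := fun hmem => ((mcov_diff hM he1M).mp hmem).2 he1t1
  have htMd : t ∉ mcov G (M \ {e1}) := fun hmem => ((mcov_diff hM he1M).mp hmem).2 he1t
  have ht1Nd : t1 ∉ mcov G (N \ {f1}) := fun hmem => ((mcov_diff hN hf1N).mp hmem).2 hf1t1
  have ht2Nd : t2 ∉ mcov G (N \ {f1}) := fun hmem => ((mcov_diff hN hf1N).mp hmem).2 hf1t2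
  have htNd : t ∉ mcov G (N \ {f1}) := fun hmem => htN (mcov_mono Set.diff_subset hmem)
  by_cases ht2M : t2 ∈ mcov G M
  case neg =>
    right
    have ht2Md : t2 ∉ mcov G (M \ {e1}) := fun hmem => ht2M (mcov_mono Set.diff_subset hmem)
    have hf1Md : f1 ∉ M \ {e1} := fun hmem => ht2Md ⟨f1, hmem, hf1t2⟩
    refine ⟨insert f1 (M \ {e1}), t2, matching_insert hMd hf1end ht1Md ht2Md, ?_, ht2M,
      ⟨f1, hf1N, hf1t2⟩, ?_⟩
    · rw [Set.ncard_insert_of_notMem hf1Md, Set.ncard_diff_singleton_add_one he1M]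
    · ext v
      simp only [Set.mem_diff, Set.mem_union, Set.mem_singleton_iff]
      constructor
      · rintro ⟨g, hg, hgv⟩
        rcases Set.mem_insert_iff.mp hg with heq | hg
        · rcases hf1end v (heq ▸ hgv) with rfl | rfl
          · exact ⟨Or.inl ⟨e1, he1M, he1t1⟩, ht1t⟩
          · exact ⟨Or.inr rfl, ht2t⟩
        · have hvM : v ∈ mcov G M := mcov_mono Set.diff_subset ⟨g, hg, hgv⟩
          refine ⟨Or.inl hvM, fun hvt => ?_⟩
          subst hvt
          exact htMd ⟨g, hg, hgv⟩
      · rintro ⟨hvM | rfl, hvt⟩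
        · rcases (mcov_diff' hM he1M).mp hvM with hvd | hve1
          · obtain ⟨g, hg, hgv⟩ := hvd
            exact ⟨g, Set.mem_insert_of_mem _ hg, hgv⟩
          · rcases he1end v hve1 with rfl | rfl
            · exact absurd rfl hvt
            · exact ⟨f1, Set.mem_insert _ _, hf1t1⟩
        · exact ⟨f1, Set.mem_insert _ _, hf1t2⟩
  case pos =>
  obtain ⟨e2, he2M, he2t2⟩ := ht2M
  have he2e1 : e2 ≠ e1 := by
    rintro rfl
    rcases he1end t2 he2t2 with rfl | rfl
    · exact ht2t rfl
    · exact ht2t1 rfl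
  have ht2Md : t2 ∈ mcov G (M \ {e1}) :=
    ⟨e2, ⟨he2M, fun hc => he2e1 (Set.mem_singleton_iff.mp hc)⟩, he2t2⟩
  have hcard2 : (M \ {e1}).ncard + 1 = M.ncard := Set.ncard_diff_singleton_add_one he1M
  have hcardN2 : (N \ {f1}).ncard + 1 = N.ncard := Set.ncard_diff_singleton_add_one hf1N
  have hlt : (M \ {e1}).ncard < n := by omega
  rcases ih (M \ {e1}).ncard hlt (M \ {e1}) (N \ {f1}) rfl hMd hNd t2 ht2Md ht2Nd with
    ⟨N2', hN2'm, hN2'c, hN2'cov⟩ | ⟨M2', x, hm2, hc2, hxM2, hxN2, hcov2⟩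
  · left
    have htN2' : t ∉ mcov G N2' := by
      intro hmem
      rcases hN2'cov hmem with hc | hc
      · exact htNd hc
      · exact htMd hc
    have ht1N2' : t1 ∉ mcov G N2' := by
      intro hmem
      rcases hN2'cov hmem with hc | hc
      · exact ht1Nd hc
      · exact ht1Md hc
    have he1N2' : e1 ∉ N2' := fun hmem => htN2' ⟨e1, hmem, he1t⟩
    refine ⟨insert e1 N2', matching_insert hN2'm he1end htN2' ht1N2', ?_, ?_⟩
    · rw [Set.ncard_insert_of_notMem he1N2']; omega
    · rintro v ⟨f, hf, hfv⟩
      rcases Set.mem_insert_iff.mp hf with heq | hf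
      · exact Or.inr ⟨e1, he1M, heq ▸ hfv⟩
      · rcases hN2'cov ⟨f, hf, hfv⟩ with hc | hc
        · exact Or.inl (mcov_mono Set.diff_subset hc)
        · exact Or.inr (mcov_mono Set.diff_subset hc)
  · right
    have hcov2' : ∀ v, v ∈ mcov G M2' ↔ (v ∈ mcov G (M \ {e1}) ∨ v = x) ∧ v ≠ t2 := by
      intro v
      rw [hcov2]
      simp only [Set.mem_diff, Set.mem_union, Set.mem_singleton_iff]
    have hxt : x ≠ t := by rintro rfl; exact htNd hxN2
    have hxt1 : x ≠ t1 := by rintro rfl; exact ht1Nd hxN2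
    have hxt2 : x ≠ t2 := by rintro rfl; exact ht2Nd hxN2
    have hxM : x ∉ mcov G M := by
      intro hmem
      rcases (mcov_diff' hM he1M).mp hmem with hc | hc
      · exact hxM2 hc
      · rcases he1end x hc with rfl | rfl
        · exact hxt rfl
        · exact hxt1 rfl
    have ht1M2' : t1 ∉ mcov G M2' := by
      intro hmem
      rcases ((hcov2' t1).mp hmem).1 with hc | hc
      · exact ht1Md hc
      · exact hxt1 hc.symm
    have ht2M2' : t2 ∉ mcov G M2' := fun hmem => ((hcov2' t2).mp hmem).2 rfl
    have hf1M2' : f1 ∉ M2' := fun hmem => ht2M2' ⟨f1, hmem, hf1t2⟩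
    refine ⟨insert f1 M2', x, matching_insert hm2 hf1end ht1M2' ht2M2', ?_, hxM,
      mcov_mono Set.diff_subset hxN2, ?_⟩
    · rw [Set.ncard_insert_of_notMem hf1M2']; omega
    · ext v
      simp only [Set.mem_diff, Set.mem_union, Set.mem_singleton_iff]
      constructor
      · rintro ⟨g, hg, hgv⟩
        rcases Set.mem_insert_iff.mp hg with heq | hg
        · rcases hf1end v (heq ▸ hgv) with rfl | rfl
          · exact ⟨Or.inl ⟨e1, he1M, he1t1⟩, ht1t⟩
          · exact ⟨Or.inl ⟨e2, he2M, he2t2⟩, ht2t⟩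
        · rcases ((hcov2' v).mp ⟨g, hg, hgv⟩).1 with hc | heq
          · refine ⟨Or.inl (mcov_mono Set.diff_subset hc), fun hvt => ?_⟩
            subst hvt; exact htMd hc
          · exact ⟨Or.inr heq, heq ▸ hxt⟩
      · rintro ⟨hvM | heq, hvt⟩
        · rcases (mcov_diff' hM he1M).mp hvM with hvd | hve1
          · by_cases hvt2 : v = t2
            · subst hvt2; exact ⟨f1, Set.mem_insert _ _, hf1t2⟩
            · obtain ⟨g, hg, hgv⟩ := (hcov2' v).mpr ⟨Or.inl hvd, hvt2⟩
              exact ⟨g, Set.mem_insert_of_mem _ hg, hgv⟩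
          · rcases he1end v hve1 with rfl | rfl
            · exact absurd rfl hvt
            · exact ⟨f1, Set.mem_insert _ _, hf1t1⟩
        · obtain ⟨g, hg, hgv⟩ := (hcov2' x).mpr ⟨Or.inr rfl, hxt2⟩
          exact ⟨g, Set.mem_insert_of_mem _ hg, by rw [heq]; exact hgv⟩

/-- Walks of a given length. -/
def PathLen (G : Multigraph V E) : ℕ → V → V → Prop
  | 0, u, w => u = w
  | n + 1, u, w => ∃ x, G.Adj u x ∧ PathLen G n x w

lemma adj_iff {u v : V} : G.Adj u v ↔ u ≠ v ∧ ∃ e, G.Inc e u ∧ G.Inc e v := by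
  simp [Multigraph.Adj, Multigraph.AdjIn]

lemma reach_pathLen {u w : V} (h : G.ReachOn Set.univ Set.univ u w) :
    ∃ n, PathLen G n u w := by
  induction h using Relation.ReflTransGen.head_induction_on with
  | refl => exact ⟨0, rfl⟩
  | head hstep _ ih =>
    obtain ⟨m, hm⟩ := ih
    exact ⟨m + 1, ⟨_, hstep.2.2, hm⟩⟩

lemma pathLen_reach {w : V} : ∀ n, ∀ u, PathLen G n u w → G.ReachOn Set.univ Set.univ u w := by
  intro n
  induction n with
  | zero => intro u hp; simp only [PathLen] at hp; subst hp; exact Relation.ReflTransGen.refl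
  | succ m ih =>
    intro u hp
    obtain ⟨x, hx, hp'⟩ := hp
    exact Relation.ReflTransGen.head ⟨trivial, trivial, hx⟩ (ih x hp')

lemma adjIn_symm {F : Set E} {u v : V} (h : G.AdjIn F u v) : G.AdjIn F v u := by
  obtain ⟨hne, e, heF, h1, h2⟩ := h
  exact ⟨hne.symm, e, heF, h2, h1⟩

lemma reach_symm {u w : V} (h : G.ReachOn Set.univ Set.univ u w) :
    G.ReachOn Set.univ Set.univ w u := by
  induction h with
  | refl => exact Relation.ReflTransGen.refl
  | tail _ hbc ih => exact Relation.ReflTransGen.head ⟨trivial, trivial, adjIn_symm hbc.2.2⟩ ih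

/-- No maximum matching misses two connected vertices (under the all-inessential hypothesis). -/
lemma no_two_exposed [Fintype V] [Fintype E]
    (h : ∀ v : V, ∃ M : Set E, G.IsMaxMatchingIn Set.univ M ∧ ∀ e ∈ M, ¬ G.Inc e v) :
    ∀ n : ℕ, ∀ M : Set E, G.IsMaxMatchingIn Set.univ M → ∀ u w : V, u ≠ w →
      u ∉ mcov G M → w ∉ mcov G M → ¬ PathLen G n u w := by
  intro n
  induction n using Nat.strong_induction_on with
  | _ n ih =>
  intro M hM u w huw hu hw hp
  match n, ih, hp with
  | 0, ih, hp => exact huw hp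
  | 1, ih, hp =>
    obtain ⟨x, hadj0, hx⟩ := hp
    simp only [PathLen] at hx
    have hadj : G.Adj u w := hx ▸ hadj0
    obtain ⟨hne, e, heu, hew⟩ := adj_iff.mp hadj
    obtain ⟨t1, het1, ht1u, hend⟩ := inc_other heu
    have hwt1 : w = t1 := by
      rcases hend w hew with rfl | rfl
      · exact absurd rfl huw
      · rfl
    have heM : e ∉ M := fun hmem => hu ⟨e, hmem, heu⟩
    have hwt1' : t1 ∉ mcov G M := hwt1 ▸ hw
    have hmatch : G.IsMatching (insert e M) := matching_insert hM.2.1 hend hu hwt1'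
    have hle := hM.2.2 (insert e M) (Set.subset_univ _) hmatch
    rw [Set.ncard_insert_of_notMem heM] at hle
    omega
  | (k + 2), ih, hp =>
    obtain ⟨t, hut, hp'⟩ := hp
    have hut' : u ≠ t := (adj_iff.mp hut).1
    by_cases htw : t = w
    · subst htw
      exact ih 1 (by omega) M hM u t huw hu hw ⟨t, hut, rfl⟩
    by_cases htM : t ∈ mcov G M
    · obtain ⟨N, hNmax, hNt⟩ := h t
      have htN : t ∉ mcov G N := fun hmem => by
        obtain ⟨e, heN, het⟩ := hmem; exact hNt e heN het
      have hMN : M.ncard = N.ncard :=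
        le_antisymm (hNmax.2.2 M hM.1 hM.2.1) (hM.2.2 N hNmax.1 hNmax.2.1)
      rcases exchange M.ncard M N rfl hM.2.1 hNmax.2.1 t htM htN with
        ⟨N', hm, hc, _⟩ | ⟨M', x, hm, hc, hxM, hxN, hcov⟩
      · have := hNmax.2.2 N' (Set.subset_univ _) hm
        omega
      · have hM'max : G.IsMaxMatchingIn Set.univ M' :=
          ⟨Set.subset_univ _, hm, fun P hP hPm => (hM.2.2 P hP hPm).trans_eq hc.symm⟩
        have hmem' : ∀ v, v ∈ mcov G M' ↔ (v ∈ mcov G M ∨ v = x) ∧ v ≠ t := by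
          intro v; rw [hcov]
          simp only [Set.mem_diff, Set.mem_union, Set.mem_singleton_iff]
        have htM' : t ∉ mcov G M' := fun hmem => ((hmem' t).mp hmem).2 rfl
        by_cases hux : u = x
        · have hwM' : w ∉ mcov G M' := by
            intro hmem
            rcases ((hmem' w).mp hmem).1 with hc2 | rfl
            · exact hw hc2
            · exact huw (hux.trans rfl)
          exact ih (k + 1) (by omega) M' hM'max t w htw htM' hwM' hp'
        · have huM' : u ∉ mcov G M' := by
            intro hmem
            rcases ((hmem' u).mp hmem).1 with hc2 | hc2
            · exact hu hc2
            · exact hux hc2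
          exact ih 1 (by omega) M' hM'max u t hut' huM' htM' ⟨t, hut, rfl⟩
    · exact ih (k + 1) (by omega) M hM t w htw htM hw hp'

end Aux

/-- If every vertex of a graph is inessential, then every connected
component of the graph is factor-critical. -/
theorem stmt7 {V E : Type} [Fintype V] [Fintype E] (G : Multigraph V E)
    (h : ∀ v : V, ∃ M : Set E, G.IsMaxMatchingIn Set.univ M ∧ ∀ e ∈ M, ¬ G.Inc e v) :
    ∀ K : Set V, G.IsCompOn Set.univ Set.univ K → G.FactorCriticalOn Set.univ K := by
  rintro K ⟨v0, -, rfl⟩ v hv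
  obtain ⟨-, hvR⟩ := hv
  obtain ⟨M, hMmax, hMv⟩ := h v
  have hvExp : v ∉ mcov G M := by
    rintro ⟨e, heM, hev⟩; exact hMv e heM hev
  refine ⟨{e | e ∈ M ∧ G.ReachOn Set.univ Set.univ (G.fst e) v0}, fun _ _ => trivial, ?_, ?_⟩
  · rintro e ⟨heM, heR⟩
    have hfst_ne : G.fst e ≠ v := fun hc => hMv e heM (Or.inl hc)
    have hsnd_ne : G.snd e ≠ v := fun hc => hMv e heM (Or.inr hc)
    have hsndR : G.ReachOn Set.univ Set.univ (G.snd e) v0 := by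
      refine Relation.ReflTransGen.head ⟨trivial, trivial, ?_⟩ heR
      exact ⟨fun hc => G.no_loop e hc.symm, e, trivial, Or.inr rfl, Or.inl rfl⟩
    constructor
    · exact ⟨⟨trivial, heR⟩, fun hc => hfst_ne (Set.mem_singleton_iff.mp hc)⟩
    · exact ⟨⟨trivial, hsndR⟩, fun hc => hsnd_ne (Set.mem_singleton_iff.mp hc)⟩
  · rintro u ⟨⟨-, huR⟩, hunv⟩
    have huv : u ≠ v := fun hc => hunv (Set.mem_singleton_iff.mpr hc)
    have hreach : G.ReachOn Set.univ Set.univ u v := huR.trans (reach_symm hvR)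
    obtain ⟨n, hpl⟩ := reach_pathLen hreach
    have huCov : u ∈ mcov G M := by
      by_contra hu
      exact no_two_exposed h n M hMmax u v huv hu hvExp hpl
    obtain ⟨e, heM, heu⟩ := huCov
    have hfstR : G.ReachOn Set.univ Set.univ (G.fst e) v0 := by
      rcases heu with hc | hc
      · rw [hc]; exact huR
      · refine Relation.ReflTransGen.head ⟨trivial, trivial, ?_⟩ huR
        exact ⟨fun h2 => G.no_loop e (h2.trans hc.symm), e, trivial, Or.inl rfl, Or.inr hc⟩
    refine ⟨e, ⟨⟨heM, hfstR⟩, heu⟩, ?_⟩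
    rintro f ⟨⟨hfM, -⟩, hfu⟩
    exact matching_unique hMmax.2.1 hfM heM hfu heu
end

section
/- Let (G,c) be a W-state graph, and let X and X' be the vertex sets of the two factor-critical components of the monochromatic subgraph G_m. Then the set of bichromatic edges of G equals the cut between X and X', i.e., every bichromatic edge has one endpoint in X and one in X'. -/
namespace Stmt9Aux
open Multigraph
variable {V E : Type}

/-- A monochromatic edge has both endpoints in a mono-component or neither. -/
lemma mono_side {G : Multigraph V E} {c : E → V → Bool} {X : Set V}
    (hX : G.IsCompOn (G.MonoEdges c) Set.univ X) {g : E}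
    (hg : ¬ G.Bichromatic c g) : (G.fst g ∈ X ↔ G.snd g ∈ X) := by
  obtain ⟨v₀, -, rfl⟩ := hX
  have hadj : G.AdjIn (G.MonoEdges c) (G.fst g) (G.snd g) :=
    ⟨G.no_loop g, g, hg, Or.inl rfl, Or.inr rfl⟩
  have hadj' : G.AdjIn (G.MonoEdges c) (G.snd g) (G.fst g) :=
    ⟨(G.no_loop g).symm, g, hg, Or.inr rfl, Or.inl rfl⟩
  constructor
  · rintro ⟨-, hr⟩
    exact ⟨trivial, Relation.ReflTransGen.head ⟨trivial, trivial, hadj'⟩ hr⟩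
  · rintro ⟨-, hr⟩
    exact ⟨trivial, Relation.ReflTransGen.head ⟨trivial, trivial, hadj⟩ hr⟩

/-- The base vertex lies in its own component. -/
lemma comp_nonempty {G : Multigraph V E} {F : Set E} {X : Set V}
    (hX : G.IsCompOn F Set.univ X) : X.Nonempty := by
  obtain ⟨v₀, -, rfl⟩ := hX
  exact ⟨v₀, trivial, Relation.ReflTransGen.refl⟩

/-- A set with a perfect matching has even cardinality. -/
lemma even_ncard_of_pm [Fintype V] (G : Multigraph V E) :
    ∀ n (S : Set V) (M : Set E), S.ncard = n → G.IsPerfectMatchingOn S M →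
      Even n := by
  intro n
  induction n using Nat.strong_induction_on with
  | _ n ih =>
    intro S M hn h
    rcases eq_or_ne n 0 with h0 | h0
    · simp [h0]
    obtain ⟨v, hv⟩ : S.Nonempty := Set.nonempty_of_ncard_ne_zero (hn ▸ h0)
    obtain ⟨g, ⟨hgM, hgi⟩, huniq⟩ := h.2 v hv
    obtain ⟨ha, hb⟩ := h.1 g hgM
    have hab : G.fst g ≠ G.snd g := G.no_loop g
    -- the new set and matching
    set S' : Set V := S \ {G.fst g, G.snd g} with hS'
    have hsub : ({G.fst g, G.snd g} : Set V) ⊆ S := by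
      rintro x (rfl | rfl) <;> assumption
    have hcard2 : ({G.fst g, G.snd g} : Set V).ncard = 2 :=
      Set.ncard_pair hab
    have hcard' : S'.ncard = n - 2 := by
      rw [hS', Set.ncard_diff hsub, hcard2, hn]
    have h2n : 2 ≤ n := by
      calc 2 = ({G.fst g, G.snd g} : Set V).ncard := hcard2.symm
        _ ≤ S.ncard := Set.ncard_le_ncard hsub S.toFinite
        _ = n := hn
    -- matching edges other than g avoid the endpoints of g
    have havoid : ∀ g' ∈ M, g' ≠ g →
        ¬ G.Inc g' (G.fst g) ∧ ¬ G.Inc g' (G.snd g) := by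
      intro g' hg' hne
      obtain ⟨ga, -, hua⟩ := h.2 (G.fst g) ha
      obtain ⟨gb, -, hub⟩ := h.2 (G.snd g) hb
      constructor
      · intro hinc
        exact hne ((hua g' ⟨hg', hinc⟩).trans (hua g ⟨hgM, Or.inl rfl⟩).symm)
      · intro hinc
        exact hne ((hub g' ⟨hg', hinc⟩).trans (hub g ⟨hgM, Or.inr rfl⟩).symm)
    have hpm' : G.IsPerfectMatchingOn S' (M \ {g}) := by
      constructor
      · rintro g' ⟨hg', hne⟩
        have hne' : g' ≠ g := hne
        obtain ⟨h1, h2⟩ := h.1 g' hg'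
        refine ⟨⟨h1, ?_⟩, ⟨h2, ?_⟩⟩
        · rintro (h' | h')
          · exact (havoid g' hg' hne').1 (Or.inl h')
          · exact (havoid g' hg' hne').2 (Or.inl (Set.mem_singleton_iff.mp h'))
        · rintro (h' | h')
          · exact (havoid g' hg' hne').1 (Or.inr h')
          · exact (havoid g' hg' hne').2 (Or.inr (Set.mem_singleton_iff.mp h'))
      · rintro v' ⟨hv'S, hv'ne⟩
        obtain ⟨g', ⟨hg', hgi'⟩, huniq'⟩ := h.2 v' hv'S
        have hne : g' ≠ g := by
          rintro rfl
          rcases hgi' with h' | h' <;> exact hv'ne (by simp [h'.symm])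
        refine ⟨g', ⟨⟨hg', hne⟩, hgi'⟩, ?_⟩
        rintro g'' ⟨⟨hg'', -⟩, hgi''⟩
        exact huniq' g'' ⟨hg'', hgi''⟩
    have := ih (n - 2) (by omega) S' (M \ {g}) hcard' hpm'
    obtain ⟨k, hk⟩ := this
    exact ⟨k + 1, by omega⟩

lemma no_internal [Fintype V] [Fintype E] (G : Multigraph V E)
    (c : E → V → Bool) (h : G.IsWState c) (X X' : Set V)
    (hd : Disjoint X X') (hu : X ∪ X' = Set.univ)
    (hX : G.IsCompOn (G.MonoEdges c) Set.univ X)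
    (hX' : G.IsCompOn (G.MonoEdges c) Set.univ X')
    {e : E} (he : G.Bichromatic c e)
    (h1 : G.fst e ∈ X) (h2 : G.snd e ∈ X) : False := by
  obtain ⟨hmc, hMC, hVC, hNR⟩ := h
  have hside : ∀ u : V, u ∈ X ∨ u ∈ X' := fun u => by
    have : u ∈ X ∪ X' := hu ▸ Set.mem_univ u
    exact this
  have hnd : ∀ u : V, u ∈ X → u ∈ X' → False :=
    fun u hx hx' => Set.disjoint_left.mp hd hx hx'
  -- a perfect matching through e; e is its unique bichromatic edge
  obtain ⟨M, hM, heM⟩ := hmc e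
  obtain ⟨bM, -, hbMu⟩ := hMC M hM
  have hMmono : ∀ g ∈ M, g ≠ e → ¬ G.Bichromatic c g := fun g hg hne hb =>
    hne ((hbMu g ⟨hg, hb⟩).trans (hbMu e ⟨heM, he⟩).symm)
  have hMX : ∀ g ∈ M, (G.fst g ∈ X ↔ G.snd g ∈ X) := by
    intro g hg
    rcases eq_or_ne g e with rfl | hne
    · exact iff_of_true h1 h2
    · exact mono_side hX (hMmono g hg hne)
  have hMX' : ∀ g ∈ M, (G.fst g ∈ X' ↔ G.snd g ∈ X') := by
    intro g hg
    rcases eq_or_ne g e with rfl | hne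
    · exact iff_of_false (fun hh => hnd _ h1 hh) (fun hh => hnd _ h2 hh)
    · exact mono_side hX' (hMmono g hg hne)
  -- a vertex v' of X' and a bichromatic edge f at v'
  obtain ⟨v', hv'⟩ := comp_nonempty hX'
  obtain ⟨f, hfi, hfr⟩ := hVC v'
  have hf : G.Bichromatic c f := by
    by_contra hb
    have hblue : c f (G.fst f) = false := hNR f hb
    have heq : c f (G.fst f) = c f (G.snd f) := by
      by_contra hne; exact hb hne
    have : c f v' = false := by
      rcases hfi with hh | hh
      · rw [← hh]; exact hblue
      · rw [← hh, ← heq]; exact hblue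
    rw [this] at hfr; exact Bool.false_ne_true hfr
  have hfX' : G.fst f ∈ X' ∨ G.snd f ∈ X' := by
    rcases hfi with hh | hh
    · exact Or.inl (hh ▸ hv')
    · exact Or.inr (hh ▸ hv')
  -- a perfect matching through f; f is its unique bichromatic edge
  obtain ⟨N, hN, hfN⟩ := hmc f
  obtain ⟨bN, -, hbNu⟩ := hMC N hN
  have hNmono : ∀ g ∈ N, g ≠ f → ¬ G.Bichromatic c g := fun g hg hne hb =>
    hne ((hbNu g ⟨hg, hb⟩).trans (hbNu f ⟨hfN, hf⟩).symm)
  by_cases hcase : G.fst f ∈ X' ∧ G.snd f ∈ X'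
  · -- CASE A: f lies inside X'. Combine M on X with N on X'.
    have hef : e ≠ f := fun hh => hnd (G.fst e) h1 (by rw [hh]; exact hcase.1)
    have hNX' : ∀ g ∈ N, (G.fst g ∈ X' ↔ G.snd g ∈ X') := by
      intro g hg
      rcases eq_or_ne g f with rfl | hne
      · exact iff_of_true hcase.1 hcase.2
      · exact mono_side hX' (hNmono g hg hne)
    set P : Set E := {g | g ∈ M ∧ G.fst g ∈ X} ∪ {g | g ∈ N ∧ G.fst g ∈ X'}
      with hPdef
    have hP : G.IsPerfectMatching P := by
      constructor
      · intro g _; exact ⟨trivial, trivial⟩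
      · rintro v -
        rcases hside v with hv | hv
        · obtain ⟨gM, ⟨hgM, hgMi⟩, hMu⟩ := hM.2 v trivial
          have hfstX : G.fst gM ∈ X := by
            rcases hgMi with hh | hh
            · rw [hh]; exact hv
            · exact (hMX gM hgM).mpr (by rw [hh]; exact hv)
          refine ⟨gM, ⟨Or.inl ⟨hgM, hfstX⟩, hgMi⟩, ?_⟩
          rintro g ⟨hgP | hgP, hgi⟩
          · exact hMu g ⟨hgP.1, hgi⟩
          · exfalso
            have hsX' : G.snd g ∈ X' := (hNX' g hgP.1).mp hgP.2
            rcases hgi with hh | hh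
            · exact hnd v hv (hh ▸ hgP.2)
            · exact hnd v hv (hh ▸ hsX')
        · obtain ⟨gN, ⟨hgN, hgNi⟩, hNu⟩ := hN.2 v trivial
          have hfstX' : G.fst gN ∈ X' := by
            rcases hgNi with hh | hh
            · rw [hh]; exact hv
            · exact (hNX' gN hgN).mpr (by rw [hh]; exact hv)
          refine ⟨gN, ⟨Or.inr ⟨hgN, hfstX'⟩, hgNi⟩, ?_⟩
          rintro g ⟨hgP | hgP, hgi⟩
          · exfalso
            have hsX : G.snd g ∈ X := (hMX g hgP.1).mp hgP.2
            rcases hgi with hh | hh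
            · exact hnd v (hh ▸ hgP.2) hv
            · exact hnd v (hh ▸ hsX) hv
          · exact hNu g ⟨hgP.1, hgi⟩
    obtain ⟨b, -, hbu⟩ := hMC P hP
    have he' : e = b := hbu e ⟨Or.inl ⟨heM, h1⟩, he⟩
    have hf' : f = b := hbu f ⟨Or.inr ⟨hfN, hcase.1⟩, hf⟩
    exact hef (he'.trans hf'.symm)
  · -- CASE B: f crosses the cut. Parity contradiction on |X'|.
    -- identify the endpoint u of f in X'; the other endpoint is in X
    obtain ⟨u, huX', hother⟩ :
        ∃ u, u ∈ X' ∧ ∀ x, G.Inc f x → x ≠ u → x ∈ X := by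
      rcases hfX' with hu1 | hu1
      · refine ⟨G.fst f, hu1, ?_⟩
        intro x hx hxne
        rcases hx with hh | hh
        · exact absurd hh.symm hxne
        · rcases hside x with hxX | hxX'
          · exact hxX
          · exact absurd ⟨hu1, hh ▸ hxX'⟩ hcase
      · refine ⟨G.snd f, hu1, ?_⟩
        intro x hx hxne
        rcases hx with hh | hh
        · rcases hside x with hxX | hxX'
          · exact hxX
          · exact absurd ⟨hh ▸ hxX', hu1⟩ hcase
        · exact absurd hh.symm hxne
    have hfnotin : G.fst f ∉ X' ∨ G.snd f ∉ X' := by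
      by_contra hcontra
      push_neg at hcontra
      exact hcase ⟨hcontra.1, hcontra.2⟩
    -- M restricted to X' is a perfect matching of X'
    have hpmM : G.IsPerfectMatchingOn X' {g | g ∈ M ∧ G.fst g ∈ X'} := by
      constructor
      · rintro g ⟨hg, hgX'⟩
        exact ⟨hgX', (hMX' g hg).mp hgX'⟩
      · intro v hv
        obtain ⟨gM, ⟨hgM, hgMi⟩, hMu⟩ := hM.2 v trivial
        have hfstX' : G.fst gM ∈ X' := by
          rcases hgMi with hh | hh
          · rw [hh]; exact hv
          · exact (hMX' gM hgM).mpr (by rw [hh]; exact hv)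
        exact ⟨gM, ⟨⟨hgM, hfstX'⟩, hgMi⟩, fun g hg => hMu g ⟨hg.1.1, hg.2⟩⟩
    have hevenX' : Even X'.ncard :=
      even_ncard_of_pm G X'.ncard X' _ rfl hpmM
    -- N restricted to X' is a perfect matching of X' \ {u}
    have hNQmono : ∀ g ∈ N, G.fst g ∈ X' → G.snd g ∈ X' → g ≠ f := by
      intro g hg hg1 hg2 hgf
      subst hgf
      rcases hfnotin with hh | hh
      · exact hh hg1
      · exact hh hg2
    have hpmN : G.IsPerfectMatchingOn (X' \ {u})
        {g | g ∈ N ∧ G.fst g ∈ X' ∧ G.snd g ∈ X'} := by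
      constructor
      · rintro g ⟨hg, hg1, hg2⟩
        have hgf : g ≠ f := hNQmono g hg hg1 hg2
        obtain ⟨gu, ⟨hgu, hgui⟩, hNuu⟩ := hN.2 u trivial
        have hfu : G.Inc f u := by
          rcases hfX' with hu1 | hu1
          · by_cases hq : G.fst f = u
            · exact Or.inl hq
            · exact absurd (hother _ (Or.inl rfl) hq) (fun hxx => hnd _ hxx hu1)
          · by_cases hq : G.snd f = u
            · exact Or.inr hq
            · exact absurd (hother _ (Or.inr rfl) hq) (fun hxx => hnd _ hxx hu1)
        have hgnotu : ¬ G.Inc g u := by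
          intro hinc
          exact hgf ((hNuu g ⟨hg, hinc⟩).trans (hNuu f ⟨hfN, hfu⟩).symm)
        refine ⟨⟨hg1, ?_⟩, ⟨hg2, ?_⟩⟩
        · exact fun hh => hgnotu (Or.inl hh)
        · exact fun hh => hgnotu (Or.inr hh)
      · rintro v ⟨hvX', hvne⟩
        have hvne' : v ≠ u := hvne
        obtain ⟨gN, ⟨hgN, hgNi⟩, hNu⟩ := hN.2 v trivial
        have hgNf : gN ≠ f := by
          rintro rfl
          exact hnd v (hother v hgNi hvne') hvX'
        have hmono := hNmono gN hgN hgNf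
        have hiff := mono_side hX' hmono
        have hfst : G.fst gN ∈ X' := by
          rcases hgNi with hh | hh
          · rw [hh]; exact hvX'
          · exact hiff.mpr (by rw [hh]; exact hvX')
        exact ⟨gN, ⟨⟨hgN, hfst, hiff.mp hfst⟩, hgNi⟩,
          fun g hg => hNu g ⟨hg.1.1, hg.2⟩⟩
    have hevenX'u : Even (X' \ {u}).ncard :=
      even_ncard_of_pm G _ _ _ rfl hpmN
    have hcard : (X' \ {u}).ncard = X'.ncard - 1 :=
      Set.ncard_diff_singleton_of_mem huX'
    have hpos : 0 < X'.ncard := (Set.ncard_pos X'.toFinite).mpr ⟨u, huX'⟩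
    obtain ⟨k, hk⟩ := hevenX'
    obtain ⟨j, hj⟩ := hevenX'u
    omega

end Stmt9Aux

/-- In a W-state graph, the bichromatic edges are exactly the cut
between the two components `X`, `X'` of the monochromatic subgraph. -/
theorem stmt9 {V E : Type} [Fintype V] [Fintype E] (G : Multigraph V E)
    (c : E → V → Bool) (h : G.IsWState c) (X X' : Set V)
    (hd : Disjoint X X') (hu : X ∪ X' = Set.univ)
    (hX : G.IsCompOn (G.MonoEdges c) Set.univ X)
    (hX' : G.IsCompOn (G.MonoEdges c) Set.univ X') :
    ∀ e : E, G.Bichromatic c e ↔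
      ((G.fst e ∈ X ∧ G.snd e ∈ X') ∨ (G.fst e ∈ X' ∧ G.snd e ∈ X)) := by
  
  intro e
  have hside : ∀ u : V, u ∈ X ∨ u ∈ X' := fun u => by
    have : u ∈ X ∪ X' := hu ▸ Set.mem_univ u
    exact this
  constructor
  · intro he
    rcases hside (G.fst e) with ha | ha <;> rcases hside (G.snd e) with hb | hb
    · exact (Stmt9Aux.no_internal G c h X X' hd hu hX hX' he ha hb).elim
    · exact Or.inl ⟨ha, hb⟩
    · exact Or.inr ⟨ha, hb⟩
    · exact (Stmt9Aux.no_internal G c h X' X hd.symm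
        (by rw [Set.union_comm]; exact hu) hX' hX he ha hb).elim
  · intro hcut
    by_contra hmono
    rcases hcut with ⟨ha, hb⟩ | ⟨ha, hb⟩
    · exact Set.disjoint_left.mp hd ((Stmt9Aux.mono_side hX hmono).mp ha) hb
    · exact Set.disjoint_left.mp hd ((Stmt9Aux.mono_side hX hmono).mpr hb) ha
end

section
/- Let (G,c) be a W-state graph whose monochromatic subgraph has components with vertex sets X and X'. If |X| = 1, then (G,c) is a W-cone whose apex is the unique vertex of X. -/
/-- If one of the two monochromatic components of a W-state graph
is a single vertex `x`, then the graph is a W-cone with apex `x`. -/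
theorem stmt10 {V E : Type} [Fintype V] [Fintype E] (G : Multigraph V E)
    (c : E → V → Bool) (h : G.IsWState c) (X X' : Set V)
    (hd : Disjoint X X') (hu : X ∪ X' = Set.univ)
    (hX : G.IsCompOn (G.MonoEdges c) Set.univ X)
    (hX' : G.IsCompOn (G.MonoEdges c) Set.univ X')
    (x : V) (hx : X = {x}) :
    G.IsWConeWithApex c x := by
  obtain ⟨hmc, hmcond, hvc, hnrm⟩ := h
  have hxX : x ∈ X := by rw [hx]; exact rfl
  -- A monochromatic edge cannot be incident with x.
  have key : ∀ e : E, ¬ G.Bichromatic c e → ¬ G.Inc e x := by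
    intro e he hinc
    obtain ⟨v₀, -, hXeq⟩ := hX
    have hym : ∀ y, G.Inc e y → y ∈ X := by
      intro y hy
      by_cases hyx : y = x
      · exact hyx ▸ hxX
      · have hadj : G.AdjIn (G.MonoEdges c) y x := ⟨hyx, e, he, hy, hinc⟩
        have hxr : G.ReachOn (G.MonoEdges c) Set.univ x v₀ := by
          have hx2 : x ∈ {u | u ∈ Set.univ ∧ G.ReachOn (G.MonoEdges c) Set.univ u v₀} := by
            rw [← hXeq]; exact hxX
          exact hx2.2
        have hyr : G.ReachOn (G.MonoEdges c) Set.univ y v₀ :=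
          Relation.ReflTransGen.head ⟨trivial, trivial, hadj⟩ hxr
        rw [hXeq]; exact ⟨trivial, hyr⟩
    have h1 : G.fst e ∈ X := hym _ (Or.inl rfl)
    have h2 : G.snd e ∈ X := hym _ (Or.inr rfl)
    rw [hx, Set.mem_singleton_iff] at h1 h2
    exact G.no_loop e (h1.trans h2.symm)
  have biff : ∀ e : E, G.Bichromatic c e ↔ G.Inc e x := by
    intro e
    constructor
    · intro hb
      obtain ⟨M, hM, heM⟩ := hmc e
      obtain ⟨f, ⟨hfM, hfx⟩, -⟩ := hM.2 x (Set.mem_univ x)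
      by_cases hbf : G.Bichromatic c f
      · obtain ⟨g, hg, hguniq⟩ := hmcond M hM
        have hef : e = f := (hguniq e ⟨heM, hb⟩).trans (hguniq f ⟨hfM, hbf⟩).symm
        rw [hef]; exact hfx
      · exact absurd hfx (key f hbf)
    · intro hinc
      by_contra hb
      exact key e hb hinc
  have huniv : G.Universal x := by
    intro u hux
    obtain ⟨e, hinc, hred⟩ := hvc u
    have hbe : G.Bichromatic c e := by
      by_contra hb
      have hfst : c e (G.fst e) = false := hnrm e hb
      have hsnd : c e (G.snd e) = false := by
        have : c e (G.fst e) = c e (G.snd e) := by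
          by_contra hne; exact hb hne
        rw [← this]; exact hfst
      rcases hinc with h1 | h1
      · rw [h1] at hfst; rw [hfst] at hred; exact Bool.false_ne_true hred
      · rw [h1] at hsnd; rw [hsnd] at hred; exact Bool.false_ne_true hred
    exact ⟨hux, e, trivial, hinc, (biff e).mp hbe⟩
  exact ⟨hmc, huniv, biff, hvc, hnrm⟩
end

section
/- Let (G,c) be a W-state graph whose monochromatic subgraph splits into factor-critical components on X and X' with min(|X|,|X'|) ≥ 3. Then the cut δ(X, X') is a non-trivial tight cut of G; in particular G is not a brick. -/
/-!
All edges of a perfect matching other than its unique bichromatic edge are monochromatic, so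
they stay inside the monochromatic component `X` or its complement; by parity the bichromatic
edge crosses `δ(X)` exactly when `|X|` is odd. If `|X|` were even, take perfect matchings
through a bichromatic edge at a vertex of `X` and through one at a vertex outside `X`. Those
edges then lie inside `X` and outside `X` respectively, so gluing the `X`-part of the second
matching to the outer part of the first gives a perfect matching with no bichromatic edge.
-/

namespace Multigraph

variable {V E : Type} {G : Multigraph V E} {A : Set V} {M : Set E} {e f : E} {u v : V}

theorem notMem_cutEdges_iff : e ∉ G.CutEdges A ↔ (G.fst e ∈ A ↔ G.snd e ∈ A) := by
  simp only [CutEdges, Set.mem_ofPred_eq]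
  tauto

theorem mem_iff_mem_of_notMem_cutEdges (he : e ∉ G.CutEdges A) (hu : G.Inc e u)
    (hv : G.Inc e v) : u ∈ A ↔ v ∈ A := by
  rw [notMem_cutEdges_iff] at he
  rcases hu with rfl | rfl <;> rcases hv with rfl | rfl <;> tauto

theorem IsCompOn.notMem_cutEdges {F : Set E} (hA : G.IsCompOn F Set.univ A) (he : e ∈ F) :
    e ∉ G.CutEdges A := by
  obtain ⟨r, -, rfl⟩ := hA
  have step : ∀ {x y}, G.Inc e x → G.Inc e y → G.ReachOn F Set.univ x r →
      G.ReachOn F Set.univ y r := fun {x y} hx hy hxr => by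
    by_cases hxy : y = x
    · exact hxy ▸ hxr
    · exact .head ⟨trivial, trivial, hxy, e, he, hy, hx⟩ hxr
  rw [notMem_cutEdges_iff]
  simp only [Set.mem_ofPred_eq, Set.mem_univ, true_and]
  exact ⟨step (.inl rfl) (.inr rfl), step (.inr rfl) (.inl rfl)⟩

theorem fst_mem_iff_of_inc (he : e ∉ G.CutEdges A) (hv : G.Inc e v) : G.fst e ∈ A ↔ v ∈ A :=
  mem_iff_mem_of_notMem_cutEdges he (.inl rfl) hv

namespace IsPerfectMatching

theorem eq_of_inc (hM : G.IsPerfectMatching M) (he : e ∈ M) (hf : f ∈ M) (hev : G.Inc e v)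
    (hfv : G.Inc f v) : e = f :=
  (hM.2 v trivial).unique ⟨he, hev⟩ ⟨hf, hfv⟩

theorem even_ncard (hM : G.IsPerfectMatching M) (hA : Disjoint M (G.CutEdges A)) :
    Even A.ncard := by
  classical
  obtain hinf | hfin := A.infinite_or_finite
  · simp [hinf.ncard]
  choose m hm using fun v => (hM.2 v trivial).exists
  have hfiber : ∀ e ∈ hfin.toFinset.image m,
      {v ∈ hfin.toFinset | m v = e} = {G.fst e, G.snd e} := by
    simp only [Finset.mem_image, Set.Finite.mem_toFinset]
    rintro _ ⟨v, hv, rfl⟩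
    ext w
    simp only [Finset.mem_filter, Set.Finite.mem_toFinset, Finset.mem_insert,
      Finset.mem_singleton]
    constructor
    · rintro ⟨-, hw⟩
      rcases hw ▸ (hm w).2 with h | h
      exacts [.inl h.symm, .inr h.symm]
    · intro hw
      have hinc : G.Inc (m v) w := by
        rcases hw with rfl | rfl
        exacts [.inl rfl, .inr rfl]
      have hvA := mem_iff_mem_of_notMem_cutEdges (hA.notMem_of_mem_left (hm v).1) (hm v).2 hinc
      exact ⟨hvA.1 hv, hM.eq_of_inc (hm w).1 (hm v).1 (hm w).2 hinc⟩
  rw [Set.ncard_eq_toFinset_card A hfin, Finset.card_eq_sum_card_image m,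
    Finset.sum_const_nat fun e he => (hfiber e he ▸ Finset.card_pair (G.no_loop e))]
  exact even_two.mul_left _

theorem odd_ncard (hM : G.IsPerfectMatching M) (hfin : A.Finite)
    (hA : M ∩ G.CutEdges A = {e}) : Odd A.ncard := by
  obtain ⟨⟨heM, hecut⟩, honly_e⟩ := Set.eq_singleton_iff_unique_mem.mp hA
  obtain ⟨u, hue, huA⟩ : ∃ u, G.Inc e u ∧ u ∈ A := by
    rcases hecut with ⟨h, -⟩ | ⟨-, h⟩
    exacts [⟨_, .inl rfl, h⟩, ⟨_, .inr rfl, h⟩]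
  have hcross : ¬(G.fst e ∈ A ↔ G.snd e ∈ A) := fun h => notMem_cutEdges_iff.mpr h hecut
  have hclosed : ∀ g ∈ M, g ∉ G.CutEdges (A \ {u}) := by
    intro g hgM
    rw [notMem_cutEdges_iff]
    simp only [Set.mem_sdiff, Set.mem_singleton_iff]
    by_cases hge : g = e
    · subst hge
      rcases hue with rfl | rfl <;> tauto
    · have hgA := notMem_cutEdges_iff.mp fun h => hge (honly_e g ⟨hgM, h⟩)
      have hgu : ¬ G.Inc g u := fun h => hge (hM.eq_of_inc hgM heM h hue)
      unfold Inc at hgu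
      tauto
  have heven := hM.even_ncard (Set.disjoint_right.mpr fun g hg hgM => hclosed g hgM hg)
  rw [← Set.ncard_sdiff_singleton_add_one huA hfin]
  exact heven.add_one

theorem sep_union_sep {M' : Set E} (hM : G.IsPerfectMatching M) (hM' : G.IsPerfectMatching M')
    (hA : Disjoint M (G.CutEdges A)) (hA' : Disjoint M' (G.CutEdges A)) :
    G.IsPerfectMatching ({e ∈ M | G.fst e ∈ A} ∪ {e ∈ M' | G.fst e ∉ A}) := by
  refine ⟨fun _ _ => ⟨trivial, trivial⟩, fun v _ => ?_⟩
  by_cases hv : v ∈ A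
  · obtain ⟨g, ⟨hgM, hgv⟩, -⟩ := hM.2 v trivial
    refine ⟨g, ⟨.inl ⟨hgM, (fst_mem_iff_of_inc (hA.notMem_of_mem_left hgM) hgv).2 hv⟩, hgv⟩,
      ?_⟩
    rintro g' ⟨⟨hg'M, -⟩ | ⟨hg'M', hg'A⟩, hg'v⟩
    · exact hM.eq_of_inc hg'M hgM hg'v hgv
    · exact absurd ((fst_mem_iff_of_inc (hA'.notMem_of_mem_left hg'M') hg'v).2 hv) hg'A
  · obtain ⟨g, ⟨hgM', hgv⟩, -⟩ := hM'.2 v trivial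
    refine ⟨g, ⟨.inr ⟨hgM', (fst_mem_iff_of_inc (hA'.notMem_of_mem_left hgM') hgv).not.2 hv⟩,
      hgv⟩, ?_⟩
    rintro g' ⟨⟨hg'M, hg'A⟩ | ⟨hg'M', -⟩, hg'v⟩
    · exact absurd ((fst_mem_iff_of_inc (hA.notMem_of_mem_left hg'M) hg'v).1 hg'A) hv
    · exact hM'.eq_of_inc hg'M' hgM' hg'v hgv

end IsPerfectMatching

namespace IsWState

variable {c : E → V → Bool}

theorem exists_bichromatic_inc (hW : G.IsWState c) (v : V) :
    ∃ e, G.Inc e v ∧ G.Bichromatic c e := by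
  obtain ⟨e, hev, hred⟩ := hW.2.2.1 v
  refine ⟨e, hev, fun hmono => ?_⟩
  have hblue := hW.2.2.2 e (not_not_intro hmono)
  rcases hev with rfl | rfl <;> simp_all

theorem eq_of_bichromatic (hW : G.IsWState c) (hM : G.IsPerfectMatching M) (he : e ∈ M)
    (hf : f ∈ M) (hbe : G.Bichromatic c e) (hbf : G.Bichromatic c f) : e = f :=
  (hW.2.1 M hM).unique ⟨he, hbe⟩ ⟨hf, hbf⟩

theorem inter_cutEdges_subset (hW : G.IsWState c)
    (hA : G.IsCompOn (G.MonoEdges c) Set.univ A) (hM : G.IsPerfectMatching M) (he : e ∈ M)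
    (hb : G.Bichromatic c e) :
    M ∩ G.CutEdges A ⊆ {e} := fun _ ⟨hgM, hgcut⟩ =>
  hW.eq_of_bichromatic hM hgM he (not_not.mp fun hmono => hA.notMem_cutEdges hmono hgcut) hb

theorem odd_ncard_of_isCompOn (hW : G.IsWState c)
    (hA : G.IsCompOn (G.MonoEdges c) Set.univ A) (hfin : A.Finite) (hu : u ∈ A) (hv : v ∉ A) :
    Odd A.ncard := by
  by_contra hodd
  have hclosed : ∀ {M e}, G.IsPerfectMatching M → e ∈ M → G.Bichromatic c e →
      Disjoint M (G.CutEdges A) := fun hM he hb =>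
    Set.disjoint_iff_inter_eq_empty.mpr <|
      (Set.subset_singleton_iff_eq.mp (hW.inter_cutEdges_subset hA hM he hb)).resolve_right
        fun h => hodd (hM.odd_ncard hfin h)
  obtain ⟨g, hgu, hgb⟩ := hW.exists_bichromatic_inc u
  obtain ⟨Mg, hMg, hgM⟩ := hW.1 g
  obtain ⟨f, hfv, hfb⟩ := hW.exists_bichromatic_inc v
  obtain ⟨Mf, hMf, hfM⟩ := hW.1 f
  have hg : G.fst g ∈ A :=
    (fst_mem_iff_of_inc ((hclosed hMg hgM hgb).notMem_of_mem_left hgM) hgu).2 hu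
  have hf : G.fst f ∉ A :=
    (fst_mem_iff_of_inc ((hclosed hMf hfM hfb).notMem_of_mem_left hfM) hfv).not.2 hv
  obtain ⟨b, ⟨hbN, hbb⟩, -⟩ :=
    hW.2.1 _ (hMf.sep_union_sep hMg (hclosed hMf hfM hfb) (hclosed hMg hgM hgb))
  rcases hbN with ⟨hbM, hbA⟩ | ⟨hbM, hbA⟩
  · exact hf (hW.eq_of_bichromatic hMf hbM hfM hbb hfb ▸ hbA)
  · exact hbA (hW.eq_of_bichromatic hMg hbM hgM hbb hgb ▸ hg)

theorem isTightCut_of_isCompOn (hW : G.IsWState c)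
    (hA : G.IsCompOn (G.MonoEdges c) Set.univ A) (hfin : A.Finite) (hu : u ∈ A) (hv : v ∉ A) :
    G.IsTightCut A := by
  have hodd := hW.odd_ncard_of_isCompOn hA hfin hu hv
  intro M hM
  obtain ⟨e, ⟨he, hb⟩, -⟩ := hW.2.1 M hM
  have hcut : M ∩ G.CutEdges A = {e} :=
    (Set.subset_singleton_iff_eq.mp (hW.inter_cutEdges_subset hA hM he hb)).resolve_left
      fun h => Nat.not_even_iff_odd.mpr hodd
        (hM.even_ncard (Set.disjoint_iff_inter_eq_empty.mpr h))
  obtain ⟨hmem, honly⟩ := Set.eq_singleton_iff_unique_mem.mp hcut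
  exact ⟨e, hmem, honly⟩

end IsWState

end Multigraph

theorem stmt11_general {V E : Type} (G : Multigraph V E)
    (c : E → V → Bool) (h : G.IsWState c) (X X' : Set V)
    (hd : Disjoint X X') (hu : X ∪ X' = Set.univ)
    (hX : G.IsCompOn (G.MonoEdges c) Set.univ X)
    (hcX : 3 ≤ X.ncard) (hcX' : 3 ≤ X'.ncard) :
    G.IsTightCut X ∧ 2 ≤ X.ncard ∧ 2 ≤ (Set.univ \ X).ncard ∧ ¬ G.IsBrick := by
  obtain rfl : X' = Xᶜ := (IsCompl.compl_eq ⟨hd, codisjoint_iff.mpr hu⟩).symm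
  have hcompl : (Set.univ \ X).ncard = Xᶜ.ncard := by rw [Set.compl_eq_univ_sdiff]
  obtain ⟨u, hu⟩ := Set.nonempty_of_ncard_ne_zero (s := X) (by omega)
  obtain ⟨v, hv⟩ := Set.nonempty_of_ncard_ne_zero (s := Xᶜ) (by omega)
  have htight := h.isTightCut_of_isCompOn hX (Set.finite_of_ncard_pos (by omega)) hu hv
  exact ⟨htight, by omega, by omega, fun hbrick => hbrick.2.2 X (by omega) (by omega) htight⟩

/-- If both monochromatic components of a W-state graph have at
least 3 vertices, then `δ(X,X')` is a non-trivial tight cut; in particular the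
graph is not a brick. -/
theorem stmt11 {V E : Type} [Fintype V] [Fintype E] (G : Multigraph V E)
    (c : E → V → Bool) (h : G.IsWState c) (X X' : Set V)
    (hd : Disjoint X X') (hu : X ∪ X' = Set.univ)
    (hX : G.IsCompOn (G.MonoEdges c) Set.univ X)
    (hX' : G.IsCompOn (G.MonoEdges c) Set.univ X')
    (hcX : 3 ≤ X.ncard) (hcX' : 3 ≤ X'.ncard) :
    G.IsTightCut X ∧ 2 ≤ X.ncard ∧ 2 ≤ (Set.univ \ X).ncard ∧ ¬ G.IsBrick :=
  stmt11_general G c h X X' hd hu hX hcX hcX'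
end

section
/- Let (G,c) be a W-state graph whose monochromatic subgraph splits into factor-critical components on X and X' with min(|X|,|X'|) ≥ 3. Then G is bicritical: for every two distinct vertices u, v of G, the graph G - {u, v} has a perfect matching. -/
namespace Multigraph

variable {V E : Type} (G : Multigraph V E)

/-- The other endpoint of an edge incident to `v`. -/
lemma aux_other {e : E} {v : V} (hv : G.Inc e v) :
    ∃ w, w ≠ v ∧ G.Inc e w ∧ ∀ z, G.Inc e z → z = v ∨ z = w := by
  rcases hv with h | h
  · refine ⟨G.snd e, by rw [← h]; exact (G.no_loop e).symm, Or.inr rfl, ?_⟩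
    rintro z (h' | h')
    · exact Or.inl (h ▸ h'.symm)
    · exact Or.inr h'.symm
  · refine ⟨G.fst e, by rw [← h]; exact (G.no_loop e), Or.inl rfl, ?_⟩
    rintro z (h' | h')
    · exact Or.inr h'.symm
    · exact Or.inl (h ▸ h'.symm)

/-- Edges of the subgraph `F` do not leave a component `K`. -/
lemma aux_comp_closed {F : Set E} {K : Set V}
    (hK : G.IsCompOn F Set.univ K) {e : E} (he : e ∈ F) :
    (G.fst e ∈ K ↔ G.snd e ∈ K) := by
  obtain ⟨v₀, -, rfl⟩ := hK
  have hadj : G.AdjIn F (G.fst e) (G.snd e) :=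
    ⟨G.no_loop e, e, he, Or.inl rfl, Or.inr rfl⟩
  have hadj' : G.AdjIn F (G.snd e) (G.fst e) :=
    ⟨(G.no_loop e).symm, e, he, Or.inr rfl, Or.inl rfl⟩
  constructor
  · rintro ⟨-, hr⟩
    exact ⟨trivial, Relation.ReflTransGen.head ⟨trivial, trivial, hadj'⟩ hr⟩
  · rintro ⟨-, hr⟩
    exact ⟨trivial, Relation.ReflTransGen.head ⟨trivial, trivial, hadj⟩ hr⟩

/-- A set having a perfect matching has even cardinality. -/
lemma aux_even [Finite V] :
    ∀ n (S : Set V) (M : Set E), S.ncard = n →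
      G.IsPerfectMatchingOn S M → Even n := by
  intro n
  induction n using Nat.strong_induction_on with
  | _ n ih =>
    intro S M hn hM
    rcases S.eq_empty_or_nonempty with rfl | ⟨v, hv⟩
    · simp only [Set.ncard_empty] at hn; exact hn ▸ Even.zero
    · obtain ⟨e, ⟨heM, hev⟩, huniq⟩ := hM.2 v hv
      have haS : G.fst e ∈ S := (hM.1 e heM).1
      have hbS : G.snd e ∈ S := (hM.1 e heM).2
      have hab : G.fst e ≠ G.snd e := G.no_loop e
      -- no other edge of M touches an endpoint of e
      have hdisj : ∀ f ∈ M, f ≠ e → ∀ w, G.Inc e w → ¬ G.Inc f w := by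
        intro f hf hfe w hew hfw
        have hwS : w ∈ S := by
          rcases hew with h | h
          · exact h ▸ haS
          · exact h ▸ hbS
        obtain ⟨g, -, hg⟩ := hM.2 w hwS
        exact hfe ((hg f ⟨hf, hfw⟩).trans (hg e ⟨heM, hew⟩).symm)
      have hsub : ({G.fst e, G.snd e} : Set V) ⊆ S := by
        rintro z (rfl | rfl); exacts [haS, hbS]
      have hkey : G.IsPerfectMatchingOn (S \ {G.fst e, G.snd e}) (M \ {e}) := by
        constructor
        · rintro f ⟨hf, hfe⟩
          have h1 := (hM.1 f hf).1
          have h2 := (hM.1 f hf).2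
          refine ⟨⟨h1, ?_⟩, ⟨h2, ?_⟩⟩
          · rintro (h | h)
            · exact hdisj f hf hfe _ (Or.inl rfl) (Or.inl h)
            · exact hdisj f hf hfe _ (Or.inr rfl) (Or.inl h)
          · rintro (h | h)
            · exact hdisj f hf hfe _ (Or.inl rfl) (Or.inr h)
            · exact hdisj f hf hfe _ (Or.inr rfl) (Or.inr h)
        · rintro z ⟨hzS, hz⟩
          obtain ⟨f, ⟨hf, hfz⟩, hfu⟩ := hM.2 z hzS
          have hfe : f ≠ e := by
            rintro rfl
            rcases hfz with h | h
            · exact hz (Or.inl h.symm)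
            · exact hz (Or.inr h.symm)
          refine ⟨f, ⟨⟨hf, hfe⟩, hfz⟩, ?_⟩
          rintro g ⟨⟨hg, -⟩, hgz⟩
          exact hfu g ⟨hg, hgz⟩
      have hSfin : S.Finite := Set.toFinite S
      have hcard2 : ({G.fst e, G.snd e} : Set V).ncard = 2 := Set.ncard_pair hab
      have hle : 2 ≤ n := by
        rw [← hn, ← hcard2]
        exact Set.ncard_le_ncard hsub hSfin
      have hdc : (S \ {G.fst e, G.snd e}).ncard = n - 2 := by
        rw [Set.ncard_diff hsub, hcard2, hn]
      have := ih (n - 2) (by omega) _ _ hdc hkey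
      obtain ⟨k, hk⟩ := this
      exact ⟨k + 1, by omega⟩

/-- Restriction of a perfect matching to a "closed" subset of vertices. -/
lemma aux_restrict {S T : Set V} {M : Set E} (hM : G.IsPerfectMatchingOn S M)
    (hTS : T ⊆ S) (hcl : ∀ e ∈ M, (G.fst e ∈ T ↔ G.snd e ∈ T)) :
    G.IsPerfectMatchingOn T {e | e ∈ M ∧ G.fst e ∈ T} := by
  constructor
  · rintro f ⟨hf, hfT⟩
    exact ⟨hfT, (hcl f hf).mp hfT⟩
  · intro v hv
    obtain ⟨f, ⟨hf, hfv⟩, hfu⟩ := hM.2 v (hTS hv)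
    have hfT : G.fst f ∈ T := by
      rcases hfv with h | h
      · exact h ▸ hv
      · exact (hcl f hf).mpr (h ▸ hv)
    refine ⟨f, ⟨⟨hf, hfT⟩, hfv⟩, ?_⟩
    rintro g ⟨⟨hg, -⟩, hgv⟩
    exact hfu g ⟨hg, hgv⟩

/-- Union of perfect matchings on disjoint vertex sets. -/
lemma aux_union_pm {A B : Set V} (hd : Disjoint A B) {N N' : Set E}
    (hN : G.IsPerfectMatchingOn A N) (hN' : G.IsPerfectMatchingOn B N') :
    G.IsPerfectMatchingOn (A ∪ B) (N ∪ N') := by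
  constructor
  · rintro f (hf | hf)
    · exact ⟨Or.inl (hN.1 f hf).1, Or.inl (hN.1 f hf).2⟩
    · exact ⟨Or.inr (hN'.1 f hf).1, Or.inr (hN'.1 f hf).2⟩
  · rintro v (hv | hv)
    · obtain ⟨f, ⟨hf, hfv⟩, hfu⟩ := hN.2 v hv
      refine ⟨f, ⟨Or.inl hf, hfv⟩, ?_⟩
      rintro g ⟨hg | hg, hgv⟩
      · exact hfu g ⟨hg, hgv⟩
      · exfalso
        have : v ∈ B := by
          rcases hgv with h | h
          · exact h ▸ (hN'.1 g hg).1
          · exact h ▸ (hN'.1 g hg).2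
        exact (hd.ne_of_mem hv this) rfl
    · obtain ⟨f, ⟨hf, hfv⟩, hfu⟩ := hN'.2 v hv
      refine ⟨f, ⟨Or.inr hf, hfv⟩, ?_⟩
      rintro g ⟨hg | hg, hgv⟩
      · exfalso
        have : v ∈ A := by
          rcases hgv with h | h
          · exact h ▸ (hN.1 g hg).1
          · exact h ▸ (hN.1 g hg).2
        exact (hd.ne_of_mem this hv) rfl
      · exact hfu g ⟨hg, hgv⟩

/-- Every vertex is incident with a bichromatic edge. -/
lemma aux_bichrom {c : E → V → Bool} (hvc : G.VertexCond c) (hnr : G.NoRedMono c)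
    (v : V) : ∃ e, G.Inc e v ∧ G.Bichromatic c e := by
  obtain ⟨e, hev, hred⟩ := hvc v
  refine ⟨e, hev, ?_⟩
  by_contra hb
  have h1 : c e (G.fst e) = false := hnr e hb
  have h2 : c e (G.snd e) = false := by
    unfold Bichromatic at hb
    push_neg at hb
    rw [← hb]; exact h1
  rcases hev with h | h
  · rw [h] at h1; rw [h1] at hred; exact Bool.false_ne_true hred
  · rw [h] at h2; rw [h2] at hred; exact Bool.false_ne_true hred

/-- Every bichromatic edge lies in a perfect matching in which it is the unique
bichromatic edge. -/
lemma aux_pm_of_edge {c : E → V → Bool} (h : G.IsWState c) {e : E}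
    (he : G.Bichromatic c e) :
    ∃ M, G.IsPerfectMatching M ∧ e ∈ M ∧
      ∀ f ∈ M, f ≠ e → f ∈ G.MonoEdges c := by
  obtain ⟨M, hM, heM⟩ := h.1 e
  obtain ⟨g, -, hgu⟩ := h.2.1 M hM
  refine ⟨M, hM, heM, fun f hf hfe hb => hfe ?_⟩
  exact (hgu f ⟨hf, hb⟩).trans (hgu e ⟨heM, he⟩).symm



/-- If the unique bichromatic edge of a perfect matching avoids a component `B`
of the monochromatic subgraph, the matching restricts to a mono perfect matching
of `B`. -/
lemma aux_side_pm {c : E → V → Bool} {B : Set V}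
    (hB : G.IsCompOn (G.MonoEdges c) Set.univ B)
    {M : Set E} (hM : G.IsPerfectMatching M) {e : E} (heM : e ∈ M)
    (hmono : ∀ f ∈ M, f ≠ e → f ∈ G.MonoEdges c)
    (h1 : G.fst e ∉ B) (h2 : G.snd e ∉ B) :
    {f | f ∈ M ∧ G.fst f ∈ B} ⊆ G.MonoEdges c ∧
      G.IsPerfectMatchingOn B {f | f ∈ M ∧ G.fst f ∈ B} := by
  have hsubm : {f | f ∈ M ∧ G.fst f ∈ B} ⊆ G.MonoEdges c := by
    rintro f ⟨hf, hfB⟩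
    by_cases hfe : f = e
    · exact absurd (hfe ▸ hfB) h1
    · exact hmono f hf hfe
  refine ⟨hsubm, G.aux_restrict hM (Set.subset_univ _) ?_⟩
  · intro f hf
    by_cases hfe : f = e
    · subst hfe; exact ⟨fun h => absurd h h1, fun h => absurd h h2⟩
    · exact G.aux_comp_closed hB (hmono f hf hfe)

/-- Near-perfect matching variant: if the exceptional edge `e` meets the
component `B` in the single vertex `w`, the rest of the matching restricts to a
mono perfect matching of `B \ {w}`. -/
lemma aux_near_pm {c : E → V → Bool} {B : Set V}
    (hB : G.IsCompOn (G.MonoEdges c) Set.univ B)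
    {M : Set E} (hM : G.IsPerfectMatching M) {e : E} (heM : e ∈ M)
    (hmono : ∀ f ∈ M, f ≠ e → f ∈ G.MonoEdges c)
    {w : V} (hw : w ∈ B) (hew : G.Inc e w)
    (hoth : ∀ z, G.Inc e z → z ≠ w → z ∉ B) :
    {f | f ∈ M ∧ G.fst f ∈ B \ {w}} ⊆ G.MonoEdges c ∧
      G.IsPerfectMatchingOn (B \ {w}) {f | f ∈ M ∧ G.fst f ∈ B \ {w}} := by
  -- endpoints of e are not in B \ {w}
  have hnot : ∀ z, G.Inc e z → z ∉ B \ {w} := by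
    intro z hz hzB
    rcases eq_or_ne z w with rfl | hzw
    · exact hzB.2 rfl
    · exact hoth z hz hzw hzB.1
  -- edges of M other than e avoid w
  have hnotw : ∀ f ∈ M, f ≠ e → ¬ G.Inc f w := by
    intro f hf hfe hfw
    obtain ⟨g, -, hgu⟩ := hM.2 w (Set.mem_univ w)
    exact hfe ((hgu f ⟨hf, hfw⟩).trans (hgu e ⟨heM, hew⟩).symm)
  have hsubm : {f | f ∈ M ∧ G.fst f ∈ B \ {w}} ⊆ G.MonoEdges c := by
    rintro f ⟨hf, hfB⟩
    by_cases hfe : f = e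
    · exact absurd hfB (hfe ▸ hnot (G.fst e) (Or.inl rfl))
    · exact hmono f hf hfe
  refine ⟨hsubm, G.aux_restrict hM (Set.subset_univ _) ?_⟩
  · intro f hf
    by_cases hfe : f = e
    · subst hfe
      exact ⟨fun h => absurd h (hnot _ (Or.inl rfl)),
             fun h => absurd h (hnot _ (Or.inr rfl))⟩
    · have hmf := hmono f hf hfe
      have hBiff := G.aux_comp_closed hB hmf
      have h1w : G.fst f ≠ w := fun h => hnotw f hf hfe (Or.inl h)
      have h2w : G.snd f ≠ w := fun h => hnotw f hf hfe (Or.inr h)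
      constructor
      · rintro ⟨hfB, -⟩; exact ⟨hBiff.mp hfB, h2w⟩
      · rintro ⟨hfB, -⟩; exact ⟨hBiff.mpr hfB, h1w⟩



/-- The unique bichromatic edge of a perfect matching cannot avoid a
monochromatic component. -/
lemma aux_internal_false [Finite V] {c : E → V → Bool} (h : G.IsWState c)
    {A B : Set V} (hd : Disjoint A B) (hu : A ∪ B = Set.univ)
    (hA : G.IsCompOn (G.MonoEdges c) Set.univ A)
    (hB : G.IsCompOn (G.MonoEdges c) Set.univ B)
    (hne : B.Nonempty)
    {M : Set E} (hM : G.IsPerfectMatching M) {e : E} (heM : e ∈ M)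
    (hmono : ∀ f ∈ M, f ≠ e → f ∈ G.MonoEdges c)
    (h1 : G.fst e ∉ B) (h2 : G.snd e ∉ B) : False := by
  obtain ⟨hNm, hN'⟩ := G.aux_side_pm hB hM heM hmono h1 h2
  have hevB : Even B.ncard := G.aux_even _ _ _ rfl hN'
  obtain ⟨x, hxB⟩ := hne
  obtain ⟨e₀, he₀x, he₀b⟩ := G.aux_bichrom h.2.2.1 h.2.2.2 x
  obtain ⟨M₀, hM₀, he₀M, hmono₀⟩ := G.aux_pm_of_edge h he₀b
  obtain ⟨y, hyx, hey, hz⟩ := G.aux_other he₀x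
  by_cases hyB : y ∈ B
  · have hmemA : ∀ z, G.Inc e₀ z → z ∉ A := by
      intro z hzi hzA
      rcases hz z hzi with rfl | rfl
      · exact hd.ne_of_mem hzA hxB rfl
      · exact hd.ne_of_mem hzA hyB rfl
    obtain ⟨hNm₀, hN₀⟩ :=
      G.aux_side_pm hA hM₀ he₀M hmono₀ (hmemA _ (Or.inl rfl)) (hmemA _ (Or.inr rfl))
    have hU := G.aux_union_pm hd hN₀ hN'
    rw [hu] at hU
    obtain ⟨g, ⟨hgU, hgb⟩, -⟩ := h.2.1 _ hU
    rcases hgU with hg | hg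
    · exact hNm₀ hg hgb
    · exact hNm hg hgb
  · have hoth : ∀ z, G.Inc e₀ z → z ≠ x → z ∉ B := by
      intro z hzi hzx
      rcases hz z hzi with rfl | rfl
      · exact absurd rfl hzx
      · exact fun _ => hyB ‹_›
    obtain ⟨-, hN₁⟩ := G.aux_near_pm hB hM₀ he₀M hmono₀ hxB he₀x hoth
    have hev1 : Even ((B \ {x}).ncard) := G.aux_even _ _ _ rfl hN₁
    rw [Set.ncard_diff_singleton_of_mem hxB] at hev1
    have hpos : 0 < B.ncard := (Set.ncard_pos (Set.toFinite B)).mpr ⟨x, hxB⟩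
    obtain ⟨k, hk⟩ := hevB
    obtain ⟨l, hl⟩ := hev1
    omega

/-- Every bichromatic edge crosses between the two monochromatic components. -/
lemma aux_cross [Finite V] {c : E → V → Bool} (h : G.IsWState c)
    {X X' : Set V} (hd : Disjoint X X') (hu : X ∪ X' = Set.univ)
    (hX : G.IsCompOn (G.MonoEdges c) Set.univ X)
    (hX' : G.IsCompOn (G.MonoEdges c) Set.univ X')
    (hneX : X.Nonempty) (hneX' : X'.Nonempty)
    {e : E} (he : G.Bichromatic c e) :
    (G.fst e ∈ X ∧ G.snd e ∈ X') ∨ (G.fst e ∈ X' ∧ G.snd e ∈ X) := by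
  obtain ⟨M, hM, heM, hmono⟩ := G.aux_pm_of_edge h he
  have hmem : ∀ z : V, z ∉ X → z ∈ X' := by
    intro z hz
    have hzu : z ∈ X ∪ X' := hu ▸ Set.mem_univ z
    rcases hzu with hh | hh
    · exact absurd hh hz
    · exact hh
  by_cases h1 : G.fst e ∈ X <;> by_cases h2 : G.snd e ∈ X
  · exact (G.aux_internal_false h hd hu hX hX' hneX' hM heM hmono
      (fun hh => hd.ne_of_mem h1 hh rfl) (fun hh => hd.ne_of_mem h2 hh rfl)).elim
  · exact Or.inl ⟨h1, hmem _ h2⟩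
  · exact Or.inr ⟨hmem _ h1, h2⟩
  · exact (G.aux_internal_false h hd.symm ((Set.union_comm X' X).trans hu)
      hX' hX hneX hM heM hmono h1 h2).elim

/-- Crossing, phrased relative to an incident vertex. -/
lemma aux_cross_at [Finite V] {c : E → V → Bool} (h : G.IsWState c)
    {X X' : Set V} (hd : Disjoint X X') (hu : X ∪ X' = Set.univ)
    (hX : G.IsCompOn (G.MonoEdges c) Set.univ X)
    (hX' : G.IsCompOn (G.MonoEdges c) Set.univ X')
    (hneX : X.Nonempty) (hneX' : X'.Nonempty)
    {e : E} (he : G.Bichromatic c e) {v : V} (hv : G.Inc e v) (hvX : v ∈ X) :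
    ∃ w, w ∈ X' ∧ G.Inc e w ∧ ∀ z, G.Inc e z → z = v ∨ z = w := by
  rcases G.aux_cross h hd hu hX hX' hneX hneX' he with ⟨hf, hs⟩ | ⟨hf, hs⟩
  · rcases hv with hv | hv
    · refine ⟨G.snd e, hs, Or.inr rfl, ?_⟩
      rintro z (h' | h')
      · exact Or.inl (hv ▸ h'.symm)
      · exact Or.inr h'.symm
    · exact absurd (hv ▸ hs) (fun hh => hd.ne_of_mem hvX hh rfl)
  · rcases hv with hv | hv
    · exact absurd (hv ▸ hf) (fun hh => hd.ne_of_mem hvX hh rfl)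
    · refine ⟨G.fst e, hf, Or.inl rfl, ?_⟩
      rintro z (h' | h')
      · exact Or.inr h'.symm
      · exact Or.inl (hv ▸ h'.symm)

/-- Each monochromatic component is factor-critical (in the mono subgraph). -/
lemma aux_fc [Finite V] {c : E → V → Bool} (h : G.IsWState c)
    {X X' : Set V} (hd : Disjoint X X') (hu : X ∪ X' = Set.univ)
    (hX : G.IsCompOn (G.MonoEdges c) Set.univ X)
    (hX' : G.IsCompOn (G.MonoEdges c) Set.univ X')
    (hneX : X.Nonempty) (hneX' : X'.Nonempty) :
    ∀ x ∈ X, ∃ N, N ⊆ G.MonoEdges c ∧ G.IsPerfectMatchingOn (X \ {x}) N := by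
  intro x hx
  obtain ⟨e, hex, heb⟩ := G.aux_bichrom h.2.2.1 h.2.2.2 x
  obtain ⟨w, hwX', hew, hz⟩ := G.aux_cross_at h hd hu hX hX' hneX hneX' heb hex hx
  obtain ⟨M, hM, heM, hmono⟩ := G.aux_pm_of_edge h heb
  have hoth : ∀ z, G.Inc e z → z ≠ x → z ∉ X := by
    intro z hzi hzx
    rcases hz z hzi with rfl | rfl
    · exact absurd rfl hzx
    · exact fun hh => hd.ne_of_mem hh hwX' rfl
  obtain ⟨hm, hN⟩ := G.aux_near_pm hX hM heM hmono hx hex hoth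
  exact ⟨_, hm, hN⟩



lemma aux_inc_mem {S : Set V} {M : Set E}
    (hM : ∀ g ∈ M, G.fst g ∈ S ∧ G.snd g ∈ S)
    {g : E} (hg : g ∈ M) {z : V} (hz : G.Inc g z) : z ∈ S := by
  rcases hz with h' | h'
  · exact h' ▸ (hM g hg).1
  · exact h' ▸ (hM g hg).2

lemma aux_same_side [Finite V] {c : E → V → Bool} (h : G.IsWState c)
    {X X' : Set V} (hd : Disjoint X X') (hu : X ∪ X' = Set.univ)
    (hX : G.IsCompOn (G.MonoEdges c) Set.univ X)
    (hX' : G.IsCompOn (G.MonoEdges c) Set.univ X')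
    (hneX : X.Nonempty) (hneX' : X'.Nonempty)
    {u v : V} (huv : u ≠ v) (huX : u ∈ X) (hvX : v ∈ X) :
    ∃ M, G.IsPerfectMatchingOn (Set.univ \ {u, v}) M := by
  obtain ⟨N, hNm, hN⟩ := G.aux_fc h hd hu hX hX' hneX hneX' u huX
  have hvX1 : v ∈ X \ {u} := ⟨hvX, fun hh => huv (Set.mem_singleton_iff.mp hh).symm⟩
  obtain ⟨f, ⟨hfN, hfv⟩, hfu⟩ := hN.2 v hvX1
  obtain ⟨w, hwv, hfw, hfz⟩ := G.aux_other hfv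
  have hwX1 : w ∈ X \ {u} := G.aux_inc_mem hN.1 hfN hfw
  obtain ⟨e, hew, heb⟩ := G.aux_bichrom h.2.2.1 h.2.2.2 w
  obtain ⟨w', hw'X', hew', hez⟩ :=
    G.aux_cross_at h hd hu hX hX' hneX hneX' heb hew hwX1.1
  obtain ⟨N', hN'm, hN'⟩ := G.aux_fc h hd.symm ((Set.union_comm X' X).trans hu)
    hX' hX hneX' hneX w' hw'X'
  -- uniqueness of matched edges at a vertex, for N and N'
  have huniqAt : ∀ z ∈ X \ {u}, ∀ g ∈ N, G.Inc g z →
      ∀ g' ∈ N, G.Inc g' z → g = g' := by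
    intro z hz g hg hgz g' hg' hg'z
    obtain ⟨g₀, -, hg₀⟩ := hN.2 z hz
    exact (hg₀ g ⟨hg, hgz⟩).trans (hg₀ g' ⟨hg', hg'z⟩).symm
  have huniqAt' : ∀ z ∈ X' \ {w'}, ∀ g ∈ N', G.Inc g z →
      ∀ g' ∈ N', G.Inc g' z → g = g' := by
    intro z hz g hg hgz g' hg' hg'z
    obtain ⟨g₀, -, hg₀⟩ := hN'.2 z hz
    exact (hg₀ g ⟨hg, hgz⟩).trans (hg₀ g' ⟨hg', hg'z⟩).symm
  -- edges of N other than f avoid v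
  have hNv : ∀ g ∈ N, G.Inc g v → g = f := fun g hg hgv => hfu g ⟨hg, hgv⟩
  -- membership helpers
  have hX'uv : ∀ z ∈ X', z ≠ u ∧ z ≠ v := by
    intro z hz
    exact ⟨fun hh => hd.ne_of_mem huX hz hh.symm, fun hh => hd.ne_of_mem hvX hz hh.symm⟩
  have hgoal : ∀ z : V, z ≠ u → z ≠ v → z ∈ Set.univ \ ({u, v} : Set V) := by
    intro z h1 h2
    refine ⟨trivial, ?_⟩
    rintro (rfl | rfl)
    · exact h1 rfl
    · exact h2 rfl
  have hwu : w ≠ u := hwX1.2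
  have hwv' : w ≠ v := hwv
  have hw'u : w' ≠ u := (hX'uv w' hw'X').1
  have hw'v : w' ≠ v := (hX'uv w' hw'X').2
  refine ⟨(N \ {f}) ∪ ({e} ∪ N'), ?_, ?_⟩
  · -- all endpoints lie in univ \ {u, v}
    rintro g (⟨hg, hgf⟩ | (rfl | hg))
    · have h1 := (hN.1 g hg).1
      have h2 := (hN.1 g hg).2
      constructor
      · exact hgoal _ h1.2 (fun hh => hgf (hNv g hg (Or.inl hh)))
      · exact hgoal _ h2.2 (fun hh => hgf (hNv g hg (Or.inr hh)))
    · constructor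
      · rcases hez _ (Or.inl rfl) with hh | hh
        · exact hh ▸ hgoal _ hwu hwv'
        · exact hh ▸ hgoal _ hw'u hw'v
      · rcases hez _ (Or.inr rfl) with hh | hh
        · exact hh ▸ hgoal _ hwu hwv'
        · exact hh ▸ hgoal _ hw'u hw'v
    · have h1 := (hN'.1 g hg).1
      have h2 := (hN'.1 g hg).2
      exact ⟨hgoal _ (hX'uv _ h1.1).1 (hX'uv _ h1.1).2,
             hgoal _ (hX'uv _ h2.1).1 (hX'uv _ h2.1).2⟩
  · -- coverage
    rintro z ⟨-, hz⟩
    have hzu : z ≠ u := fun hh => hz (Or.inl hh)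
    have hzv : z ≠ v := fun hh => hz (Or.inr hh)
    have hzX : z ∈ X ∨ z ∈ X' := by
      have := hu ▸ Set.mem_univ z
      exact this
    rcases hzX with hzX | hzX'
    · -- z on the X side
      have hzX1 : z ∈ X \ {u} := ⟨hzX, hzu⟩
      rcases eq_or_ne z w with rfl | hzw
      · -- z = w, matched by e
        refine ⟨e, ⟨Or.inr (Or.inl rfl), hew⟩, ?_⟩
        rintro g ⟨⟨hg, hgf⟩ | (rfl | hg), hgz⟩
        · exact absurd (huniqAt z hzX1 g hg hgz f hfN hfw) hgf
        · rfl
        · exact absurd (G.aux_inc_mem hN'.1 hg hgz).1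
            (fun hh => hd.ne_of_mem hzX hh rfl)
      · -- z matched within N
        obtain ⟨g₁, ⟨hg₁N, hg₁z⟩, -⟩ := hN.2 z hzX1
        have hg₁f : g₁ ≠ f := by
          rintro rfl
          rcases hfz z hg₁z with rfl | rfl
          · exact hzv rfl
          · exact hzw rfl
        refine ⟨g₁, ⟨Or.inl ⟨hg₁N, hg₁f⟩, hg₁z⟩, ?_⟩
        rintro g ⟨⟨hg, hgf⟩ | (rfl | hg), hgz⟩
        · exact huniqAt z hzX1 g hg hgz g₁ hg₁N hg₁z
        · exfalso
          rcases hez z hgz with rfl | rfl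
          · exact hzw rfl
          · exact hd.ne_of_mem hzX hw'X' rfl
        · exact absurd (G.aux_inc_mem hN'.1 hg hgz).1
            (fun hh => hd.ne_of_mem hzX hh rfl)
    · -- z on the X' side
      rcases eq_or_ne z w' with rfl | hzw'
      · refine ⟨e, ⟨Or.inr (Or.inl rfl), hew'⟩, ?_⟩
        rintro g ⟨⟨hg, hgf⟩ | (rfl | hg), hgz⟩
        · exact absurd (G.aux_inc_mem hN.1 hg hgz).1
            (fun hh => hd.ne_of_mem hh hzX' rfl)
        · rfl
        · exact absurd rfl (G.aux_inc_mem hN'.1 hg hgz).2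
      · have hzX1' : z ∈ X' \ {w'} := ⟨hzX', hzw'⟩
        obtain ⟨g₁, ⟨hg₁N, hg₁z⟩, -⟩ := hN'.2 z hzX1'
        refine ⟨g₁, ⟨Or.inr (Or.inr hg₁N), hg₁z⟩, ?_⟩
        rintro g ⟨⟨hg, hgf⟩ | (rfl | hg), hgz⟩
        · exact absurd (G.aux_inc_mem hN.1 hg hgz).1
            (fun hh => hd.ne_of_mem hh hzX' rfl)
        · exfalso
          rcases hez z hgz with rfl | rfl
          · exact hd.ne_of_mem hwX1.1 hzX' rfl
          · exact hzw' rfl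
        · exact huniqAt' z hzX1' g hg hgz g₁ hg₁N hg₁z




lemma aux_mixed [Finite V] {c : E → V → Bool} (h : G.IsWState c)
    {X X' : Set V} (hd : Disjoint X X') (hu : X ∪ X' = Set.univ)
    (hX : G.IsCompOn (G.MonoEdges c) Set.univ X)
    (hX' : G.IsCompOn (G.MonoEdges c) Set.univ X')
    (hneX : X.Nonempty) (hneX' : X'.Nonempty)
    {u v : V} (huX : u ∈ X) (hvX' : v ∈ X') :
    ∃ M, G.IsPerfectMatchingOn (Set.univ \ {u, v}) M := by
  have hu' : X' ∪ X = Set.univ := (Set.union_comm X' X).trans hu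
  have hmem : ∀ z : V, z ∈ X ∨ z ∈ X' := by
    intro z
    have hz : z ∈ X ∪ X' := hu ▸ Set.mem_univ z
    exact hz
  obtain ⟨N, -, hN⟩ := G.aux_fc h hd hu hX hX' hneX hneX' u huX
  obtain ⟨N', -, hN'⟩ := G.aux_fc h hd.symm hu' hX' hX hneX' hneX v hvX'
  have hdd : Disjoint (X \ {u}) (X' \ {v}) :=
    hd.mono Set.diff_subset Set.diff_subset
  have hU := G.aux_union_pm hdd hN hN'
  have hset : (X \ {u}) ∪ (X' \ {v}) = Set.univ \ ({u, v} : Set V) := by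
    ext z
    constructor
    · rintro (⟨hz, hzu⟩ | ⟨hz, hzv⟩)
      · refine ⟨trivial, ?_⟩
        rintro (rfl | rfl)
        · exact hzu rfl
        · exact hd.ne_of_mem hz hvX' rfl
      · refine ⟨trivial, ?_⟩
        rintro (rfl | rfl)
        · exact hd.ne_of_mem huX hz rfl
        · exact hzv rfl
    · rintro ⟨-, hz⟩
      rcases hmem z with hzX | hzX'
      · exact Or.inl ⟨hzX, fun hh => hz (Or.inl hh)⟩
      · exact Or.inr ⟨hzX', fun hh => hz (Or.inr hh)⟩
  rw [hset] at hU
  exact ⟨_, hU⟩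


end Multigraph

/-- If both monochromatic components of a W-state graph have at
least 3 vertices, then the graph is bicritical. -/
theorem stmt12 {V E : Type} [Fintype V] [Fintype E] (G : Multigraph V E)
    (c : E → V → Bool) (h : G.IsWState c) (X X' : Set V)
    (hd : Disjoint X X') (hu : X ∪ X' = Set.univ)
    (hX : G.IsCompOn (G.MonoEdges c) Set.univ X)
    (hX' : G.IsCompOn (G.MonoEdges c) Set.univ X')
    (hcX : 3 ≤ X.ncard) (hcX' : 3 ≤ X'.ncard) :
    ∀ u v : V, u ≠ v →
      ∃ M : Set E, G.IsPerfectMatchingOn (Set.univ \ {u, v}) M := by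
  intro u v huv
  have hneX : X.Nonempty := Set.nonempty_of_ncard_ne_zero (by omega)
  have hneX' : X'.Nonempty := Set.nonempty_of_ncard_ne_zero (by omega)
  have hu' : X' ∪ X = Set.univ := (Set.union_comm X' X).trans hu
  have hmem : ∀ z : V, z ∈ X ∨ z ∈ X' := by
    intro z
    have hz : z ∈ X ∪ X' := hu ▸ Set.mem_univ z
    exact hz
  rcases hmem u with huX | huX' <;> rcases hmem v with hvX | hvX'
  · exact G.aux_same_side h hd hu hX hX' hneX hneX' huv huX hvX
  · exact G.aux_mixed h hd hu hX hX' hneX hneX' huX hvX'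
  · exact G.aux_mixed h hd.symm hu' hX' hX hneX' hneX huX' hvX
  · exact G.aux_same_side h hd.symm hu' hX' hX hneX' hneX huv huX' hvX'
end

section
/- Every W-cone contains a pair of parallel edges incident with its apex vertex; in particular, no W-cone is a simple graph. -/
lemma ends_of_inc {V E : Type} (G : Multigraph V E) {e : E} {u v : V}
    (huv : u ≠ v) (h1 : G.Inc e u) (h2 : G.Inc e v) :
    (G.fst e = u ∧ G.snd e = v) ∨ (G.fst e = v ∧ G.snd e = u) := by
  rcases h1 with a | a <;> rcases h2 with b | b
  · exact absurd (a.symm.trans b) huv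
  · exact Or.inl ⟨a, b⟩
  · exact Or.inr ⟨b, a⟩
  · exact absurd (a.symm.trans b) huv

/-- Every W-cone contains a pair of parallel edges incident with
its apex; in particular no W-cone is simple. -/
theorem stmt15 {V E : Type} [Fintype V] [Fintype E] (G : Multigraph V E)
    (c : E → V → Bool) (v : V) (h : G.IsWConeWithApex c v) :
    ∃ e f : E, e ≠ f ∧ G.Parallel e f ∧ G.Inc e v := by
  obtain ⟨hmc, huniv, hbic, hvc, hnrm⟩ := h
  obtain ⟨e, hev, hce⟩ := hvc v
  -- the other endpoint of e
  obtain ⟨u, huv, hIncu, hcu⟩ : ∃ u, u ≠ v ∧ G.Inc e u ∧ c e u = false := by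
    have hbe : G.Bichromatic c e := (hbic e).mpr hev
    unfold Multigraph.Bichromatic at hbe
    rcases hev with h1 | h1
    · refine ⟨G.snd e, fun h2 => G.no_loop e (h1.trans h2.symm), Or.inr rfl, ?_⟩
      rw [h1, hce] at hbe
      cases hsnd : c e (G.snd e)
      · rfl
      · exact absurd hsnd.symm hbe
    · refine ⟨G.fst e, fun h2 => G.no_loop e (h2.trans h1.symm), Or.inl rfl, ?_⟩
      rw [h1, hce] at hbe
      cases hfst : c e (G.fst e)
      · rfl
      · exact absurd hfst hbe
  obtain ⟨f, hfu, hcf⟩ := hvc u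
  have hbf : G.Bichromatic c f := by
    by_contra hnb
    have hblue := hnrm f hnb
    unfold Multigraph.Bichromatic at hnb
    push_neg at hnb
    rcases hfu with h2 | h2
    · rw [h2, hcf] at hblue; exact Bool.true_eq_false.mp hblue
    · rw [hnb, h2, hcf] at hblue; exact Bool.true_eq_false.mp hblue
  have hfv : G.Inc f v := (hbic f).mp hbf
  have hef : e ≠ f := by
    intro hEq
    rw [hEq] at hcu
    rw [hcu] at hcf
    exact Bool.false_ne_true hcf
  refine ⟨e, f, hef, ?_, hev⟩
  rcases ends_of_inc G huv hIncu hev with ⟨a1, a2⟩ | ⟨a1, a2⟩ <;>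
    rcases ends_of_inc G huv hfu hfv with ⟨b1, b2⟩ | ⟨b1, b2⟩
  · exact Or.inl ⟨a1.trans b1.symm, a2.trans b2.symm⟩
  · exact Or.inr ⟨a1.trans b2.symm, a2.trans b1.symm⟩
  · exact Or.inr ⟨a1.trans b2.symm, a2.trans b1.symm⟩
  · exact Or.inl ⟨a1.trans b1.symm, a2.trans b2.symm⟩
end
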